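/- arXiv:2212.11592 — 11 statements merged into one kernel-verified Lean document; each statement's English description precedes it below -/
import Mathlib

section
/- Let γ ∈ ℝ with 0 < γ ≤ 1/4. Then c_n > 0 for every n ≥ 0. -/
/-!
The ratio bound `c (n+1) ≥ c n / 2 > 0` is inductive when `γ ≤ 1/4`:
`c (n+2) = c (n+1) - γ c n ≥ c (n+1) - c n / 4 ≥ c (n+1) / 2`.
-/

section LinearRecurrence

variable {γ : ℝ} {u : ℕ → ℝ}

theorem pos_and_half_le_succ_of_rec (hγ : γ ≤ 1 / 4) (h0 : 0 < u 0) (h1 : u 0 / 2 ≤ u 1)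
    (hrec : ∀ n, u (n + 2) = u (n + 1) - γ * u n) (n : ℕ) :
    0 < u n ∧ u n / 2 ≤ u (n + 1) := by
  induction n with
  | zero => exact ⟨h0, h1⟩
  | succ k ih =>
    obtain ⟨hpos, hhalf⟩ := ih
    have hγu : γ * u k ≤ u k / 4 := by nlinarith
    exact ⟨by linarith, by linarith [hrec k]⟩

theorem pos_of_rec (hγ : γ ≤ 1 / 4) (h0 : 0 < u 0) (h1 : u 0 / 2 ≤ u 1)
    (hrec : ∀ n, u (n + 2) = u (n + 1) - γ * u n) (n : ℕ) : 0 < u n :=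
  (pos_and_half_le_succ_of_rec hγ h0 h1 hrec n).1

end LinearRecurrence

theorem stmt_2_general (γ : ℝ) (hγ4 : γ ≤ 1 / 4)
    (c : ℤ → ℝ)
    (hc0 : c 0 = 1) (hc1 : c 1 = 1)
    (hcrec : ∀ n : ℕ, c ((n : ℤ) + 2) = c ((n : ℤ) + 1) - γ * c (n : ℤ)) :
    ∀ n : ℕ, 0 < c (n : ℤ) := by
  refine pos_of_rec (u := fun n : ℕ => c n) hγ4 (by simp [hc0]) (by norm_num [hc0, hc1]) ?_
  intro n
  simpa only [Nat.cast_add, Nat.cast_ofNat, Nat.cast_one] using hcrec n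

/-- If `0 < γ ≤ 1/4` then all the trace coefficients `c n` are positive. -/
theorem stmt_2 (γ : ℝ) (hγ0 : 0 < γ) (hγ4 : γ ≤ 1 / 4)
    (c : ℤ → ℝ)
    (hcneg : ∀ m : ℤ, m < 0 → c m = 0)
    (hc0 : c 0 = 1) (hc1 : c 1 = 1)
    (hcrec : ∀ n : ℕ, c ((n : ℤ) + 2) = c ((n : ℤ) + 1) - γ * c (n : ℤ)) :
    ∀ n : ℕ, 0 < c (n : ℤ) :=
  stmt_2_general γ hγ4 c hc0 hc1 hcrec
end

section
/- Let k ∈ ℕ with k ≥ 3, and let γ = 1/(4·cos²(π/k)). Then c_n > 0 for all 0 ≤ n ≤ k − 2, and c_{k−1} = 0. -/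
/-!
Writing `x = cos (π / k)`, the rescaled sequence `(2x)ⁿ cₙ` obeys the Chebyshev recurrence
`Uₙ₊₂ = 2x Uₙ₊₁ - Uₙ` with `U₀ = 1`, `U₁ = 2x`, so `cₙ = Uₙ(x) / (2x)ⁿ`. Since
`Uₙ(cos θ) sin θ = sin ((n + 1) θ)`, the sign of `cₙ` is that of `sin ((n + 1) π / k)`,
which is positive for `n ≤ k - 2` and vanishes at `n = k - 1`.
-/

open Polynomial Polynomial.Chebyshev Real

theorem Polynomial.Chebyshev.U_eval_div_pow_add_two {K : Type*} [Field K] {x : K} (hx : 2 * x ≠ 0)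
    (n : ℕ) :
    (U K (n + 2 : ℕ)).eval x / (2 * x) ^ (n + 2) =
      (U K (n + 1 : ℕ)).eval x / (2 * x) ^ (n + 1) -
        1 / (4 * x ^ 2) * ((U K n).eval x / (2 * x) ^ n) := by
  push_cast
  rw [U_add_two, show 4 * x ^ 2 = (2 * x) ^ 2 by ring]
  simp only [eval_sub, eval_mul, eval_ofNat, eval_X]
  generalize 2 * x = y at hx ⊢
  field_simp
  ring

theorem eq_U_eval_div_pow_of_rec {K : Type*} [Field K] {x : K} (hx : 2 * x ≠ 0) (c : ℤ → K)
    (hc0 : c 0 = 1) (hc1 : c 1 = 1)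
    (hcrec : ∀ n : ℕ, c ((n : ℤ) + 2) = c ((n : ℤ) + 1) - 1 / (4 * x ^ 2) * c (n : ℤ)) :
    ∀ n : ℕ, c n = (U K n).eval x / (2 * x) ^ n := by
  refine Nat.twoStepInduction ?_ ?_ fun n ih₀ ih₁ => ?_
  · simp [hc0]
  · simp [hc1, hx]
  · rw [U_eval_div_pow_add_two hx, ← ih₀, ← ih₁]
    exact_mod_cast hcrec n

theorem Polynomial.Chebyshev.U_real_cos_pos {θ : ℝ} (hθ : 0 < θ) {n : ℕ}
    (hn : (n + 1) * θ < π) : 0 < (U ℝ n).eval (cos θ) := by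
  have hsin : 0 < sin θ := sin_pos_of_pos_of_lt_pi hθ (by nlinarith)
  have h := U_real_cos θ n
  push_cast at h
  exact pos_of_mul_pos_left (h ▸ sin_pos_of_pos_of_lt_pi (by positivity) hn) hsin.le

theorem Polynomial.Chebyshev.U_real_cos_pi_div {k : ℕ} (hk : 2 ≤ k) :
    (U ℝ (k - 1 : ℕ)).eval (cos (π / k)) = 0 := by
  have hsin : sin (π / k) ≠ 0 :=
    (sin_pos_of_pos_of_lt_pi (by positivity)
      (div_lt_self pi_pos (by exact_mod_cast hk))).ne'
  have h := U_real_cos (π / k) (k - 1 : ℕ)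
  have hk0 : (k : ℝ) ≠ 0 := by positivity
  rw [show (((k - 1 : ℕ) : ℤ) : ℝ) + 1 = k by push_cast [show 1 ≤ k by omega]; ring,
    mul_div_cancel₀ π hk0, sin_pi] at h
  exact (mul_eq_zero.mp h).resolve_right hsin

theorem stmt_3_general (k : ℕ) (hk : 3 ≤ k)
    (γ : ℝ) (hγ : γ = 1 / (4 * Real.cos (Real.pi / k) ^ 2))
    (c : ℤ → ℝ)
    (hc0 : c 0 = 1) (hc1 : c 1 = 1)
    (hcrec : ∀ n : ℕ, c ((n : ℤ) + 2) = c ((n : ℤ) + 1) - γ * c (n : ℤ)) :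
    (∀ n : ℕ, n ≤ k - 2 → 0 < c (n : ℤ)) ∧ c ((k : ℤ) - 1) = 0 := by
  subst hγ
  have hkR : (3 : ℝ) ≤ k := by exact_mod_cast hk
  have hθ : 0 < π / k := by positivity
  have hcos : 0 < cos (π / k) :=
    cos_pos_of_mem_Ioo ⟨by linarith [pi_pos], div_lt_div_of_pos_left pi_pos two_pos (by linarith)⟩
  have hc := eq_U_eval_div_pow_of_rec (by positivity) c hc0 hc1 hcrec
  refine ⟨fun n hn => ?_, ?_⟩
  · rw [hc n]
    refine div_pos (U_real_cos_pos hθ ?_) (by positivity)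
    have hn' : (n : ℝ) + 1 < k := by exact_mod_cast (by omega : n + 1 < k)
    rw [← mul_div_assoc, div_lt_iff₀ (by positivity)]
    nlinarith [pi_pos]
  · rw [show (k : ℤ) - 1 = (k - 1 : ℕ) by omega, hc, U_real_cos_pi_div (by omega), zero_div]

/-- For `k ≥ 3` and `γ = 1/(4 cos²(π/k))`, the coefficients `c n` are positive
for `0 ≤ n ≤ k - 2` and `c (k-1) = 0`. -/
theorem stmt_3 (k : ℕ) (hk : 3 ≤ k)
    (γ : ℝ) (hγ : γ = 1 / (4 * Real.cos (Real.pi / k) ^ 2))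
    (c : ℤ → ℝ)
    (hcneg : ∀ m : ℤ, m < 0 → c m = 0)
    (hc0 : c 0 = 1) (hc1 : c 1 = 1)
    (hcrec : ∀ n : ℕ, c ((n : ℤ) + 2) = c ((n : ℤ) + 1) - γ * c (n : ℤ)) :
    (∀ n : ℕ, n ≤ k - 2 → 0 < c (n : ℤ)) ∧ c ((k : ℤ) - 1) = 0 :=
  stmt_3_general k hk γ hγ c hc0 hc1 hcrec
end

section
/- For every parameter γ ∈ ℂ and every n ≥ 0, the identity ∑_{i=0}^{⌊n/2⌋} γ^i · c_{n−2i} · (binom(n,i) − binom(n,i−1)) = 1 holds, where binom(n,−1) := 0. -/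
/-!
Write `T(n, N) = ∑_{i<N} γ^i c_{n-2i} d_{n,i}`. Pascal's rule `d_{n+2,i+1} = d_{n+1,i+1} + d_{n+1,i}`
together with the recurrence for `c` gives `T(n+2, N+1) = T(n+1, N+1) - γ^{N+1} c_{n-2N} d_{n+1,N}`,
and the correction term vanishes as soon as `n < 2N`. So `T(n, N)` does not depend on `n` in the
range `n < 2N`, and `T(0, N) = T(1, N) = 1`.

The recurrence for `c` also holds at index `-1`, but fails at `-2`; that failure is harmless
because it only meets the vanishing middle dimension `d_{2j+1,j+1} = 0`.
-/

open Finset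

def tlDim : ℕ → ℕ → ℤ
  | _, 0 => 1
  | n, i + 1 => n.choose (i + 1) - n.choose i

lemma tlDim_succ_succ (n i : ℕ) : tlDim (n + 1) (i + 1) = tlDim n (i + 1) + tlDim n i := by
  cases i with
  | zero => simp [tlDim]
  | succ i =>
    simp only [tlDim, Nat.choose_succ_succ' n (i + 1), Nat.choose_succ_succ' n i]
    push_cast
    ring

lemma tlDim_two_mul_add_one_succ (j : ℕ) : tlDim (2 * j + 1) (j + 1) = 0 := by
  simp [tlDim, Nat.choose_symm_half]

lemma cast_tlDim {R : Type*} [Ring R] (n i : ℕ) :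
    (tlDim n i : R) = n.choose i - if i = 0 then 0 else (n.choose (i - 1) : R) := by
  cases i <;> simp [tlDim]

section

variable {R : Type*} [CommRing R] (γ : R) (c : ℤ → R)

def dimSum (n N : ℕ) : R :=
  ∑ i ∈ range N, γ ^ i * c ((n : ℤ) - 2 * i) * tlDim n i

variable {γ c}

lemma recurrence_of_neg_one_le (hcneg : ∀ m : ℤ, m < 0 → c m = 0) (hc0 : c 0 = 1)
    (hc1 : c 1 = 1) (hcrec : ∀ n : ℕ, c ((n : ℤ) + 2) = c ((n : ℤ) + 1) - γ * c (n : ℤ))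
    {m : ℤ} (hm : -1 ≤ m) : c (m + 2) = c (m + 1) - γ * c m := by
  obtain ⟨k, rfl⟩ | rfl : (∃ k : ℕ, m = k) ∨ m = -1 := by
    rcases eq_or_lt_of_le hm with h | h
    · exact Or.inr h.symm
    · exact Or.inl (Int.eq_ofNat_of_zero_le (by omega))
  · exact hcrec k
  · norm_num [hc0, hc1, hcneg]

lemma apply_mul_tlDim_succ (hcneg : ∀ m : ℤ, m < 0 → c m = 0)
    (hrec : ∀ m : ℤ, -1 ≤ m → c (m + 2) = c (m + 1) - γ * c m) (n i : ℕ) :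
    c ((n : ℤ) + 2 - 2 * i) * tlDim (n + 1) i
      = (c ((n : ℤ) + 1 - 2 * i) - γ * c ((n : ℤ) - 2 * i)) * tlDim (n + 1) i := by
  by_cases hm : -1 ≤ (n : ℤ) - 2 * i
  · rw [show (n : ℤ) + 2 - 2 * i = (n - 2 * i) + 2 by ring,
      show (n : ℤ) + 1 - 2 * i = (n - 2 * i) + 1 by ring, hrec _ hm]
  by_cases hm₂ : (n : ℤ) - 2 * i = -2
  · obtain ⟨j, rfl, rfl⟩ : ∃ j, n = 2 * j ∧ i = j + 1 := ⟨i - 1, by omega, by omega⟩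
    simp [tlDim_two_mul_add_one_succ]
  · rw [hcneg _ (by omega), hcneg _ (by omega), hcneg _ (by omega)]
    ring

lemma dimSum_add_two (hcneg : ∀ m : ℤ, m < 0 → c m = 0)
    (hrec : ∀ m : ℤ, -1 ≤ m → c (m + 2) = c (m + 1) - γ * c m) (n N : ℕ) :
    dimSum γ c (n + 2) (N + 1)
      = dimSum γ c (n + 1) (N + 1) - γ ^ (N + 1) * c ((n : ℤ) - 2 * N) * tlDim (n + 1) N := by
  set h : ℕ → R := fun i ↦ γ ^ i * c ((n : ℤ) - 2 * i) * tlDim (n + 1) i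
  have hpascal : dimSum γ c (n + 2) (N + 1)
      = ∑ i ∈ range (N + 1), γ ^ i * c ((n : ℤ) + 2 - 2 * i) * tlDim (n + 1) i
        + γ * ∑ i ∈ range N, h i := by
    rw [dimSum, sum_range_succ', sum_range_succ' _ N, mul_sum, add_right_comm, ← sum_add_distrib]
    congr 1
    refine sum_congr rfl fun i _ ↦ ?_
    push_cast [h, tlDim_succ_succ]
    rw [show (n : ℤ) + 2 - 2 * (i + 1) = n - 2 * i by ring]
    ring
  have hrec' : ∑ i ∈ range (N + 1), γ ^ i * c ((n : ℤ) + 2 - 2 * i) * tlDim (n + 1) i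
      = dimSum γ c (n + 1) (N + 1) - γ * ∑ i ∈ range (N + 1), h i := by
    rw [dimSum, mul_sum, ← sum_sub_distrib]
    refine sum_congr rfl fun i _ ↦ ?_
    rw [mul_assoc, apply_mul_tlDim_succ hcneg hrec]
    push_cast
    ring
  rw [hpascal, hrec', sum_range_succ]
  ring

lemma dimSum_succ_of_lt_two (hcneg : ∀ m : ℤ, m < 0 → c m = 0) {n : ℕ} (hn : n < 2) (M : ℕ) :
    dimSum γ c n (M + 1) = c n := by
  rw [dimSum, sum_range_succ', sum_eq_zero fun i _ ↦ by rw [hcneg _ (by omega)]; ring]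
  simp [tlDim]

lemma dimSum_eq_one (hcneg : ∀ m : ℤ, m < 0 → c m = 0) (hc0 : c 0 = 1) (hc1 : c 1 = 1)
    (hrec : ∀ m : ℤ, -1 ≤ m → c (m + 2) = c (m + 1) - γ * c m) (n : ℕ) :
    ∀ N, n < 2 * N → dimSum γ c n N = 1 := by
  induction n using Nat.twoStepInduction with
  | zero =>
    rintro (_ | M) hM
    · omega
    · simpa using (dimSum_succ_of_lt_two hcneg (n := 0) (by omega) M).trans hc0
  | one =>
    rintro (_ | M) hM
    · omega
    · simpa using (dimSum_succ_of_lt_two hcneg (n := 1) (by omega) M).trans hc1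
  | more n _ ih =>
    rintro (_ | M) hM
    · omega
    · rw [dimSum_add_two hcneg hrec, hcneg _ (by omega), mul_zero, zero_mul, sub_zero]
      exact ih _ (by omega)

end

/-- Normalization identity: `∑_{i=0}^{⌊n/2⌋} γ^i c_{n-2i} (binom(n,i) - binom(n,i-1)) = 1`,
where `binom(n,-1) := 0`. -/
theorem stmt_4 (γ : ℂ)
    (c : ℤ → ℂ)
    (hcneg : ∀ m : ℤ, m < 0 → c m = 0)
    (hc0 : c 0 = 1) (hc1 : c 1 = 1)
    (hcrec : ∀ n : ℕ, c ((n : ℤ) + 2) = c ((n : ℤ) + 1) - γ * c (n : ℤ)) :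
    ∀ n : ℕ,
      ∑ i ∈ Finset.range (n / 2 + 1),
        γ ^ i * c ((n : ℤ) - 2 * (i : ℤ)) *
          ((n.choose i : ℂ) - (if i = 0 then 0 else (n.choose (i - 1) : ℂ))) = 1 := by
  intro n
  have hrec : ∀ m : ℤ, -1 ≤ m → c (m + 2) = c (m + 1) - γ * c m :=
    fun _ ↦ recurrence_of_neg_one_le hcneg hc0 hc1 hcrec
  simpa only [dimSum, cast_tlDim] using dimSum_eq_one hcneg hc0 hc1 hrec n (n / 2 + 1) (by omega)
end

section
/- Let A be the free ℝ-module with basis {a_{(n,i)} : (n,i) ∈ ℕ × ℕ} (finitely supported functions ℕ × ℕ → ℝ), equipped with the unique bilinear multiplication determined on basis elements by a_{(n,i)} · a_{(m,j)} = a_{(n+m, i+j)} + a_{(n+m, i+j+1)}. Then this multiplication is commutative and associative. -/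
/-!
On the basis `a_p = single p 1`, `p ∈ ℕ × ℕ`, the product is `a_p · a_q = a_{p+q} + a_{p+q+(0,1)}`,
which is symmetric in `p, q`, and both bracketings of `a_p · a_q · a_r` equal
`a_s + 2 a_{s+(0,1)} + a_{s+(0,2)}` with `s = p + q + r`. Commutativity and associativity
of a bilinear product can be checked on a basis.
-/

namespace LinearMap

variable {ι R M N : Type*} [CommSemiring R] [AddCommMonoid M] [Module R M]
  [AddCommMonoid N] [Module R N]

theorem apply_comm_of_basis (b : Module.Basis ι R M) (B : M →ₗ[R] M →ₗ[R] N)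
    (h : ∀ i j, B (b i) (b j) = B (b j) (b i)) (x y : M) : B x y = B y x := by
  have hflip : B = B.flip := ext_basis b b h
  exact congr($hflip x y)

theorem apply_assoc_of_basis (b : Module.Basis ι R M) (B : M →ₗ[R] M →ₗ[R] M)
    (h : ∀ i j k, B (B (b i) (b j)) (b k) = B (b i) (B (b j) (b k))) (x y z : M) :
    B (B x y) z = B x (B y z) := by
  have on_basis_jk : ∀ j k, B (B x (b j)) (b k) = B x (B (b j) (b k)) := fun j k =>
    congr($(b.ext (f₁ := B.flip (b k) ∘ₗ B.flip (b j)) (f₂ := B.flip (B (b j) (b k)))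
      fun i => h i j k) x)
  have on_basis_k : ∀ k, B (B x y) (b k) = B x (B y (b k)) := fun k =>
    congr($(b.ext (f₁ := B.flip (b k) ∘ₗ B x) (f₂ := B x ∘ₗ B.flip (b k))
      fun j => on_basis_jk j k) y)
  exact congr($(b.ext (f₁ := B (B x y)) (f₂ := B x ∘ₗ B y) on_basis_k) z)

end LinearMap

/-- The graph algebra of the generic Temperley–Lieb Bratteli diagram: the unique
bilinear multiplication on the free ℝ-module with basis `ℕ × ℕ` determined by
`a_{(n,i)} · a_{(m,j)} = a_{(n+m,i+j)} + a_{(n+m,i+j+1)}` is commutative and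
associative. -/
theorem stmt_5
    (mul : ((ℕ × ℕ) →₀ ℝ) →ₗ[ℝ] ((ℕ × ℕ) →₀ ℝ) →ₗ[ℝ] ((ℕ × ℕ) →₀ ℝ))
    (hmul : ∀ n i m j : ℕ,
      mul (Finsupp.single (n, i) 1) (Finsupp.single (m, j) 1) =
        Finsupp.single (n + m, i + j) 1 + Finsupp.single (n + m, i + j + 1) 1) :
    (∀ x y : (ℕ × ℕ) →₀ ℝ, mul x y = mul y x) ∧
    (∀ x y z : (ℕ × ℕ) →₀ ℝ, mul (mul x y) z = mul x (mul y z)) := by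
  have mul_basis : ∀ p q : ℕ × ℕ, mul (Finsupp.single p 1) (Finsupp.single q 1) =
      Finsupp.single (p + q) 1 + Finsupp.single (p + q + (0, 1)) 1 := by
    rintro ⟨n, i⟩ ⟨m, j⟩
    exact hmul n i m j
  refine ⟨LinearMap.apply_comm_of_basis Finsupp.basisSingleOne mul fun p q => ?_,
    LinearMap.apply_assoc_of_basis Finsupp.basisSingleOne mul fun p q r => ?_⟩
  · simp only [Finsupp.coe_basisSingleOne, mul_basis, add_comm p q]
  · simp only [Finsupp.coe_basisSingleOne, mul_basis, map_add, LinearMap.add_apply,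
      add_right_comm _ (0, 1) r, add_assoc]
end

section
/- Fix an integer l ≥ 3 and a parameter γ ∈ ℂ. For every n ≥ 0: if n + 1 ≡ 0 (mod l) (i.e. n is critical) then λ_n = c_n; otherwise λ_n = c_n + γ^{j}·c_{n−2j}, where j := (n+1) mod l. -/
/-!
Write `j(n) = (n + 1) mod l` and `S_j(n) = c_n + γ^j c_{n-2j}`. Since `c_n` and its reflection
`c_{n-2j}` both obey the recursion of `c`, `S_{j+2}(n) = S_{j+1}(n-1) - γ S_j(n-2)`, while `j`
drops by one from `n` to `n-1` inside a period. This identity accounts for each restriction rule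
of `λ`: for `n ≡ 1` the factor `2` comes from `S_0 = 2c` at the critical `n-2`; for critical `n`
the term `γ^l λ_{n-2l} = γ^l c_{n-2l}` is the reflected part of `S_l(n)`, leaving `c_n`; and for
`n ≡ 0` the rule `λ_n = λ_{n-1}` is `S_1(n) = c_{n-1}`.
-/

theorem Nat.add_one_mod_eq_ite {l : ℕ} (hl : 0 < l) (n : ℕ) :
    (n + 1) % l = if n % l = l - 1 then 0 else n % l + 1 := by
  rcases Nat.lt_or_ge l 2 with hl1 | hl2
  · obtain rfl : l = 1 := by omega
    simp [Nat.mod_one]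
  · rw [Nat.add_mod_eq_ite, Nat.one_mod_eq_one.mpr (by omega)]
    have := Nat.mod_lt n hl
    split_ifs <;> omega

theorem Nat.ne_two_mul_mod {n : ℕ} (hn : n ≠ 0) (l : ℕ) : n ≠ 2 * (n % l) := by
  intro h
  have hdiv := Nat.mod_add_div n l
  rcases Nat.eq_zero_or_pos l with rfl | hl
  · rw [Nat.mod_zero] at h
    omega
  · have hlt := Nat.mod_lt n hl
    rcases Nat.eq_zero_or_pos (n / l) with h0 | h0
    · rw [h0] at hdiv; omega
    · nlinarith

theorem Nat.mod_add_one_of_add_one_mod_ne_zero {l n : ℕ} (hl : 0 < l) (h : (n + 1) % l ≠ 0) :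
    n % l + 1 = (n + 1) % l := by
  have := Nat.add_one_mod_eq_ite hl n
  split_ifs at this <;> omega

section Coefficients

variable {R : Type*} [CommRing R] {γ : R} {c : ℤ → R}

theorem add_two_eq_of_ne_neg_two (hneg : ∀ m : ℤ, m < 0 → c m = 0)
    (h0 : c 0 = 1) (h1 : c 1 = 1)
    (hrec : ∀ n : ℕ, c ((n : ℤ) + 2) = c ((n : ℤ) + 1) - γ * c (n : ℤ))
    {m : ℤ} (hm : m ≠ -2) : c (m + 2) = c (m + 1) - γ * c m := by
  rcases lt_trichotomy m (-1) with h | rfl | h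
  · simp [hneg (m + 2) (by omega), hneg (m + 1) (by omega), hneg m (by omega)]
  · norm_num [h0, h1, hneg]
  · lift m to ℕ using by omega
    exact hrec m

def reflectedSum (γ : R) (c : ℤ → R) (j : ℕ) (m : ℤ) : R :=
  c m + γ ^ j * c (m - 2 * j)

theorem reflectedSum_zero (m : ℤ) : reflectedSum γ c 0 m = 2 * c m := by
  simp only [reflectedSum]
  ring_nf

def traceCoeff (l : ℕ) (γ : R) (c : ℤ → R) (n : ℕ) : R :=
  if (n + 1) % l = 0 then c n else reflectedSum γ c ((n + 1) % l) n

theorem traceCoeff_of_mod_eq_zero {l n : ℕ} (h : (n + 1) % l = 0) :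
    traceCoeff l γ c n = c n :=
  if_pos h

theorem traceCoeff_of_mod_eq {l n j : ℕ} (h : (n + 1) % l = j) (hj : j ≠ 0) :
    traceCoeff l γ c n = reflectedSum γ c j n := by
  rw [traceCoeff, if_neg (h ▸ hj), h]

section Recurrence

variable (hc : ∀ m : ℤ, m ≠ -2 → c (m + 2) = c (m + 1) - γ * c m)
include hc

theorem reflectedSum_one {m : ℤ} (hm : m ≠ -2) : reflectedSum γ c 1 (m + 2) = c (m + 1) := by
  have h := hc m hm
  simp only [reflectedSum]
  push_cast
  ring_nf at h ⊢
  linear_combination h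

theorem reflectedSum_add_two (j : ℕ) {m : ℤ} (hm0 : m ≠ -2) (hm : m ≠ 2 * j) :
    reflectedSum γ c (j + 2) (m + 2) =
      reflectedSum γ c (j + 1) (m + 1) - γ * reflectedSum γ c j m := by
  have ha := hc m hm0
  have hb := hc (m - 2 * j - 2) (by omega)
  simp only [reflectedSum]
  push_cast
  ring_nf at ha hb ⊢
  linear_combination ha + γ ^ (j + 1) * hb

variable {l m : ℕ}

theorem traceCoeff_add_two_of_mod_eq_zero (hl : 2 ≤ l) (h : (m + 2) % l = 0) :
    traceCoeff l γ c (m + 2) = traceCoeff l γ c (m + 1) := by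
  have hj : (m + 2 + 1) % l = 1 := by
    rw [Nat.add_one_mod_eq_ite (by omega), h, if_neg (by omega)]
  rw [traceCoeff_of_mod_eq hj one_ne_zero, traceCoeff_of_mod_eq_zero h]
  push_cast
  exact reflectedSum_one hc (by omega)

theorem traceCoeff_add_two_of_mod_eq_one (hl : 3 ≤ l) (h : (m + 2) % l = 1) :
    traceCoeff l γ c (m + 2) = traceCoeff l γ c (m + 1) - 2 * γ * traceCoeff l γ c m := by
  have hj : (m + 2 + 1) % l = 2 := by
    rw [Nat.add_one_mod_eq_ite (by omega), h, if_neg (by omega)]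
  have hprev : (m + 1) % l = 0 := by
    have : (m + 1) % l + 1 = (m + 2) % l :=
      Nat.mod_add_one_of_add_one_mod_ne_zero (by omega) (by show (m + 2) % l ≠ 0; omega)
    omega
  have hm : m ≠ 0 := by
    have := Nat.ne_two_mul_mod (n := m + 2) (by omega) l
    omega
  have key := reflectedSum_add_two hc 0 (m := m) (by omega) (by omega)
  rw [traceCoeff_of_mod_eq hj two_ne_zero, traceCoeff_of_mod_eq h one_ne_zero,
    traceCoeff_of_mod_eq_zero hprev]
  rw [reflectedSum_zero] at key
  push_cast
  linear_combination key

theorem traceCoeff_add_two_of_mod_eq_pred (hl : 3 ≤ l) (h : (m + 2) % l = l - 1) :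
    traceCoeff l γ c (m + 2) = traceCoeff l γ c (m + 1) - γ * traceCoeff l γ c m -
      γ ^ l * c (((m + 2 : ℕ) : ℤ) - 2 * l) := by
  have hnext : (m + 2 + 1) % l = 0 := by
    rw [Nat.add_one_mod_eq_ite (by omega), if_pos h]
  have hprev : (m + 1) % l + 1 = (m + 2) % l :=
    Nat.mod_add_one_of_add_one_mod_ne_zero (by omega) (by show (m + 2) % l ≠ 0; omega)
  have hm := Nat.ne_two_mul_mod (n := m + 2) (by omega) l
  have key := reflectedSum_add_two hc (l - 2) (m := m) (by omega) (by omega)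
  rw [show l - 2 + 2 = l by omega, show l - 2 + 1 = l - 1 by omega] at key
  rw [traceCoeff_of_mod_eq_zero hnext, traceCoeff_of_mod_eq h (by omega),
    traceCoeff_of_mod_eq (n := m) (j := l - 2) (by omega) (by omega)]
  push_cast at key ⊢
  rw [show reflectedSum γ c l ((m : ℤ) + 2) = c (m + 2) + γ ^ l * c (m + 2 - 2 * l) from rfl]
    at key
  linear_combination key

theorem traceCoeff_add_two_of_mod_ne (hl : 0 < l) (h0 : (m + 2) % l ≠ 0) (h1 : (m + 2) % l ≠ 1)
    (hL : (m + 2) % l ≠ l - 1) :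
    traceCoeff l γ c (m + 2) = traceCoeff l γ c (m + 1) - γ * traceCoeff l γ c m := by
  obtain ⟨j, hj⟩ : ∃ j, (m + 2) % l = j + 2 := ⟨(m + 2) % l - 2, by omega⟩
  have hnext : (m + 2 + 1) % l = j + 3 := by
    rw [Nat.add_one_mod_eq_ite hl, hj, if_neg (by omega)]
  have hprev : (m + 1) % l + 1 = (m + 2) % l :=
    Nat.mod_add_one_of_add_one_mod_ne_zero hl (by show (m + 2) % l ≠ 0; omega)
  have hm := Nat.ne_two_mul_mod (n := m + 2) (by omega) l
  have key := reflectedSum_add_two hc (j + 1) (m := m) (by omega) (by omega)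
  rw [traceCoeff_of_mod_eq hnext (by omega), traceCoeff_of_mod_eq hj (by omega),
    traceCoeff_of_mod_eq (n := m) (j := j + 1) (by omega) (by omega)]
  push_cast
  exact key

end Recurrence

theorem lam_sub_two_mul_eq {l n : ℕ} (hl : 0 < l) {lam : ℤ → R}
    (hcneg : ∀ m : ℤ, m < 0 → c m = 0) (hlneg : ∀ m : ℤ, m < 0 → lam m = 0)
    (ih : ∀ k < n, lam k = traceCoeff l γ c k) (h : (n + 1) % l = 0) :
    lam (n - 2 * l) = c (n - 2 * l) := by
  rcases lt_or_ge n (2 * l) with hlt | hge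
  · rw [hlneg _ (by omega), hcneg _ (by omega)]
  · obtain ⟨k, rfl⟩ : ∃ k, n = k + 2 * l := ⟨n - 2 * l, by omega⟩
    have hk : (k + 1) % l = 0 := by
      rw [← Nat.add_mul_mod_self_right (k + 1) 2 l, ← h]
      ring_nf
    rw [show ((k + 2 * l : ℕ) : ℤ) - 2 * l = k by push_cast; ring, ih k (by omega),
      traceCoeff_of_mod_eq_zero hk]

theorem lam_eq_traceCoeff {l : ℕ} (hl : 3 ≤ l) {lam : ℤ → R}
    (hc : ∀ m : ℤ, m ≠ -2 → c (m + 2) = c (m + 1) - γ * c m)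
    (hcneg : ∀ m : ℤ, m < 0 → c m = 0) (hc0 : c 0 = 1) (hc1 : c 1 = 1)
    (hlneg : ∀ m : ℤ, m < 0 → lam m = 0) (hl0 : lam 0 = 1) (hl1 : lam 1 = 1)
    (hrec0 : ∀ n : ℕ, 2 ≤ n → n % l = 0 → lam (n : ℤ) = lam ((n : ℤ) - 1))
    (hrec1 : ∀ n : ℕ, 2 ≤ n → n % l = 1 →
      lam (n : ℤ) = lam ((n : ℤ) - 1) - 2 * γ * lam ((n : ℤ) - 2))
    (hrecl : ∀ n : ℕ, 2 ≤ n → n % l = l - 1 →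
      lam (n : ℤ) = lam ((n : ℤ) - 1) - γ * lam ((n : ℤ) - 2) - γ ^ l * lam ((n : ℤ) - 2 * l))
    (hrece : ∀ n : ℕ, 2 ≤ n → n % l ≠ 0 → n % l ≠ 1 → n % l ≠ l - 1 →
      lam (n : ℤ) = lam ((n : ℤ) - 1) - γ * lam ((n : ℤ) - 2))
    (n : ℕ) : lam n = traceCoeff l γ c n := by
  induction n using Nat.strong_induction_on with
  | _ n ih =>
  match n, ih with
  | 0, _ =>
    rw [Nat.cast_zero, hl0, traceCoeff_of_mod_eq (Nat.mod_eq_of_lt (by omega)) one_ne_zero]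
    simp [reflectedSum, hc0, hcneg]
  | 1, _ =>
    rw [Nat.cast_one, hl1, traceCoeff_of_mod_eq (Nat.mod_eq_of_lt (by omega)) two_ne_zero]
    simp [reflectedSum, hc1, hcneg]
  | m + 2, ih =>
    have e1 : ((m + 2 : ℕ) : ℤ) - 1 = (m + 1 : ℕ) := by push_cast; ring
    have e2 : ((m + 2 : ℕ) : ℤ) - 2 = m := by push_cast; ring
    have ih1 := ih (m + 1) (by omega)
    have ih0 := ih m (by omega)
    by_cases h0 : (m + 2) % l = 0
    · rw [hrec0 _ (by omega) h0, e1, ih1, traceCoeff_add_two_of_mod_eq_zero hc (by omega) h0]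
    by_cases h1 : (m + 2) % l = 1
    · rw [hrec1 _ (by omega) h1, e1, e2, ih1, ih0, traceCoeff_add_two_of_mod_eq_one hc hl h1]
    by_cases hL : (m + 2) % l = l - 1
    · have hcrit : (m + 2 + 1) % l = 0 :=
        (Nat.add_one_mod_eq_ite (by omega) _).trans (if_pos hL)
      rw [hrecl _ (by omega) hL, e1, e2, ih1, ih0,
        lam_sub_two_mul_eq (by omega) hcneg hlneg ih hcrit,
        traceCoeff_add_two_of_mod_eq_pred hc hl hL]
    · rw [hrece _ (by omega) h0 h1 hL, e1, e2, ih1, ih0,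
        traceCoeff_add_two_of_mod_ne hc (by omega) h0 h1 hL]

end Coefficients

/-- For `l ≥ 3`, the root-of-unity trace coefficients `λ_n` satisfy
`λ_n = c_n` if `n` is critical (`l ∣ n+1`), and
`λ_n = c_n + γ^j c_{n-2j}` with `j = (n+1) mod l` otherwise. -/
theorem stmt_8 (l : ℕ) (hl : 3 ≤ l) (γ : ℂ)
    (c : ℤ → ℂ)
    (hcneg : ∀ m : ℤ, m < 0 → c m = 0)
    (hc0 : c 0 = 1) (hc1 : c 1 = 1)
    (hcrec : ∀ n : ℕ, c ((n : ℤ) + 2) = c ((n : ℤ) + 1) - γ * c (n : ℤ))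
    (lam : ℤ → ℂ)
    (hlneg : ∀ m : ℤ, m < 0 → lam m = 0)
    (hl0 : lam 0 = 1) (hl1 : lam 1 = 1)
    (hrec0 : ∀ n : ℕ, 2 ≤ n → n % l = 0 → lam (n : ℤ) = lam ((n : ℤ) - 1))
    (hrec1 : ∀ n : ℕ, 2 ≤ n → n % l = 1 →
      lam (n : ℤ) = lam ((n : ℤ) - 1) - 2 * γ * lam ((n : ℤ) - 2))
    (hrecl : ∀ n : ℕ, 2 ≤ n → n % l = l - 1 →
      lam (n : ℤ) = lam ((n : ℤ) - 1) - γ * lam ((n : ℤ) - 2) - γ ^ l * lam ((n : ℤ) - 2 * l))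
    (hrece : ∀ n : ℕ, 2 ≤ n → n % l ≠ 0 → n % l ≠ 1 → n % l ≠ l - 1 →
      lam (n : ℤ) = lam ((n : ℤ) - 1) - γ * lam ((n : ℤ) - 2)) :
    ∀ n : ℕ,
      ((n + 1) % l = 0 → lam (n : ℤ) = c (n : ℤ)) ∧
      ((n + 1) % l ≠ 0 →
        lam (n : ℤ) = c (n : ℤ) +
          γ ^ ((n + 1) % l) * c ((n : ℤ) - 2 * (((n + 1) % l : ℕ) : ℤ))) := by
  intro n
  have hc (m : ℤ) (hm : m ≠ -2) := add_two_eq_of_ne_neg_two hcneg hc0 hc1 hcrec hm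
  have hlam := lam_eq_traceCoeff hl hc hcneg hc0 hc1 hlneg hl0 hl1 hrec0 hrec1 hrecl hrece n
  exact ⟨fun h => hlam.trans (traceCoeff_of_mod_eq_zero h),
    fun h => hlam.trans (traceCoeff_of_mod_eq rfl h)⟩
end

section
/- Fix l = 2 and a parameter γ ∈ ℂ. Then for every n ≥ 0, λ_{2n+1} = c_{2n+1} and λ_{2n+2} = c_{2n+2} + γ·c_{2n}. -/
/-!
Both odd subsequences `n ↦ λ_{2n-1}` and `n ↦ c_{2n-1}` satisfy the linear recurrence
`x_{n+2} = (1 - 2γ) x_{n+1} - γ² x_n` with initial values `x_0 = 0`, `x_1 = 1`, hence coincide.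
For `λ` this is the defining recursion together with `λ_{2n+2} = λ_{2n+1}`; for `c` it comes from
eliminating the even terms of the recursion, which also gives `c_{2n+2} + γ c_{2n} = c_{2n+1}`
and so settles the even indices.
-/

section

variable {R : Type*} [CommRing R]

def oddRecurrence (γ : R) : LinearRecurrence R := ⟨2, ![-γ ^ 2, 1 - 2 * γ]⟩

variable {γ : R}

theorem isSolution_oddRecurrence {s : ℤ → R}
    (hs : ∀ n : ℕ, s (2 * n + 3) = (1 - 2 * γ) * s (2 * n + 1) - γ ^ 2 * s (2 * n - 1)) :
    (oddRecurrence γ).IsSolution fun n : ℕ => s (2 * n - 1) := by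
  intro n
  change s (2 * ((n + 2 : ℕ) : ℤ) - 1) =
    ∑ i : Fin 2, ![-γ ^ 2, 1 - 2 * γ] i * s (2 * ((n + i : ℕ) : ℤ) - 1)
  rw [Fin.sum_univ_two]
  simp only [Matrix.cons_val_zero, Matrix.cons_val_one, Fin.val_zero, Fin.val_one]
  push_cast
  linear_combination (norm := ring_nf) hs n

theorem odd_eq_of_oddRecurrence {s t : ℤ → R}
    (hs : ∀ n : ℕ, s (2 * n + 3) = (1 - 2 * γ) * s (2 * n + 1) - γ ^ 2 * s (2 * n - 1))
    (ht : ∀ n : ℕ, t (2 * n + 3) = (1 - 2 * γ) * t (2 * n + 1) - γ ^ 2 * t (2 * n - 1))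
    (h_neg_one : s (-1) = t (-1)) (h_one : s 1 = t 1) (n : ℕ) :
    s (2 * n + 1) = t (2 * n + 1) := by
  have hst := ((oddRecurrence γ).eq_iff_eqOn_range_order _ _
    (isSolution_oddRecurrence hs) (isSolution_oddRecurrence ht)).2 <| by
    change Set.EqOn _ _ ((Finset.range 2 : Finset ℕ) : Set ℕ)
    intro k hk
    simp only [Finset.coe_range, Set.mem_Iio] at hk
    interval_cases k <;> simpa
  convert congrFun hst (n + 1) using 2 <;> push_cast <;> ring

section SequenceC

variable {c : ℤ → R}

theorem eq_sub_mul_pred (hc_neg_one : c (-1) = 0) (hc0 : c 0 = 1) (hc1 : c 1 = 1)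
    (hcrec : ∀ n : ℕ, c ((n : ℤ) + 2) = c ((n : ℤ) + 1) - γ * c (n : ℤ)) (n : ℕ) :
    c (n + 1) = c n - γ * c (n - 1) := by
  cases n with
  | zero => simp [hc_neg_one, hc0, hc1]
  | succ m => linear_combination (norm := (push_cast; ring_nf)) hcrec m

variable (hc : ∀ n : ℕ, c (n + 1) = c n - γ * c (n - 1))
include hc

theorem odd_add_three_of_eq_sub_mul_pred (n : ℕ) :
    c (2 * n + 3) = (1 - 2 * γ) * c (2 * n + 1) - γ ^ 2 * c (2 * n - 1) := by
  linear_combination (norm := (push_cast; ring_nf))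
    hc (2 * n + 2) + hc (2 * n + 1) + γ * hc (2 * n)

theorem even_add_mul_eq_odd_of_eq_sub_mul_pred (n : ℕ) :
    c (2 * n + 2) + γ * c (2 * n) = c (2 * n + 1) := by
  linear_combination (norm := (push_cast; ring_nf)) hc (2 * n + 1)

end SequenceC

section SequenceLambda

variable {lam : ℤ → R}

theorem even_eq_odd_of_rec (hl1 : lam 1 = 1) (hl2 : lam 2 = 1)
    (hrec2 : ∀ n : ℕ, 1 ≤ n → lam (2 * (n : ℤ) + 2) = lam (2 * (n : ℤ) + 1)) (n : ℕ) :
    lam (2 * n + 2) = lam (2 * n + 1) := by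
  rcases n.eq_zero_or_pos with rfl | hn
  · simp [hl1, hl2]
  · exact hrec2 n hn

theorem odd_add_three_of_rec
    (hrec1 : ∀ n : ℕ, 1 ≤ n →
      lam (2 * (n : ℤ) + 1) =
        lam (2 * (n : ℤ)) - 2 * γ * lam (2 * (n : ℤ) - 1) - γ ^ 2 * lam (2 * (n : ℤ) - 3))
    (heven : ∀ n : ℕ, lam (2 * n + 2) = lam (2 * n + 1)) (n : ℕ) :
    lam (2 * n + 3) = (1 - 2 * γ) * lam (2 * n + 1) - γ ^ 2 * lam (2 * n - 1) := by
  linear_combination (norm := (push_cast; ring_nf)) hrec1 (n + 1) (by omega) + heven n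

end SequenceLambda

end

/-- For `l = 2` (the case `δ = 0`): `λ_{2n+1} = c_{2n+1}` and
`λ_{2n+2} = c_{2n+2} + γ c_{2n}` for all `n ≥ 0`. -/
theorem stmt_9 (γ : ℂ)
    (c : ℤ → ℂ)
    (hcneg : ∀ m : ℤ, m < 0 → c m = 0)
    (hc0 : c 0 = 1) (hc1 : c 1 = 1)
    (hcrec : ∀ n : ℕ, c ((n : ℤ) + 2) = c ((n : ℤ) + 1) - γ * c (n : ℤ))
    (lam : ℤ → ℂ)
    (hlm1 : lam (-1) = 0)
    (hl1 : lam 1 = 1) (hl2 : lam 2 = 1)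
    (hrec1 : ∀ n : ℕ, 1 ≤ n →
      lam (2 * (n : ℤ) + 1) =
        lam (2 * (n : ℤ)) - 2 * γ * lam (2 * (n : ℤ) - 1) - γ ^ 2 * lam (2 * (n : ℤ) - 3))
    (hrec2 : ∀ n : ℕ, 1 ≤ n → lam (2 * (n : ℤ) + 2) = lam (2 * (n : ℤ) + 1)) :
    ∀ n : ℕ,
      lam (2 * (n : ℤ) + 1) = c (2 * (n : ℤ) + 1) ∧
      lam (2 * (n : ℤ) + 2) = c (2 * (n : ℤ) + 2) + γ * c (2 * (n : ℤ)) := by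
  intro n
  have hc_neg_one : c (-1) = 0 := hcneg (-1) (by norm_num)
  have hc := eq_sub_mul_pred hc_neg_one hc0 hc1 hcrec
  have heven := even_eq_odd_of_rec hl1 hl2 hrec2
  have hodd : lam (2 * n + 1) = c (2 * n + 1) :=
    odd_eq_of_oddRecurrence (odd_add_three_of_rec hrec1 heven)
      (odd_add_three_of_eq_sub_mul_pred hc) (hlm1.trans hc_neg_one.symm) (hl1.trans hc1.symm) n
  exact ⟨hodd, by rw [heven, hodd, even_add_mul_eq_odd_of_eq_sub_mul_pred hc]⟩
end

section
/- Fix an integer l ≥ 3 and let γ ∈ ℝ with 0 < γ ≤ 1/4. Then λ_n > 0 for every n ≥ 0. -/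
/-!
For `n = m * l + j` with `m ≥ 1` and `j ≤ l - 2` the recursion gives `λ_n = e_m * d_j`, where
`e_m = λ_{m l - 1}` is the value at the end of the previous block and `d` solves
`d_{j+2} = d_{j+1} - γ d_j` with `d_0 = 1`, `d_1 = 1 - 2γ`; the first block is `λ_j = c_j`.
Feeding this into the recursion at `n ≡ l - 1` shows that the block ends satisfy
`e_{m+2} = d_{l-1} e_{m+1} - γ^l e_m`.

So `c`, `d` and `e` all solve recurrences `x_{n+2} = a x_{n+1} - b x_n` with `4 b ≤ a ^ 2`, and for
those the ratio `x_{n+1} / x_n` never drops below `a / 2` once it starts there, which keeps them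
positive. For `c` and `d` this is `4 γ ≤ 1`; for `e` it is `4 γ^l ≤ d_{l-1}^2`, which follows from
`d_j ≥ 2^{-j}`. Below, `c = linRec 1 γ 1 1`, `d = linRec 1 γ 1 (1 - 2 * γ)` and
`e_m = blockEnd lam l m`.
-/

def linRec (a b x₀ x₁ : ℝ) : ℕ → ℝ
  | 0 => x₀
  | 1 => x₁
  | n + 2 => a * linRec a b x₀ x₁ (n + 1) - b * linRec a b x₀ x₁ n

section LinearRecurrence

variable {a b : ℝ} {x : ℕ → ℝ}

theorem half_mul_le_succ_of_rec (ha : 0 ≤ a) (hab : 4 * b ≤ a ^ 2)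
    (hx : ∀ n, x (n + 2) = a * x (n + 1) - b * x n) (h0 : 0 ≤ x 0) (h1 : a / 2 * x 0 ≤ x 1) :
    ∀ n, 0 ≤ x n ∧ a / 2 * x n ≤ x (n + 1) := by
  intro n
  induction n with
  | zero => exact ⟨h0, h1⟩
  | succ n ih =>
    obtain ⟨hn, hratio⟩ := ih
    have hn1 : 0 ≤ x (n + 1) := (mul_nonneg (by positivity) hn).trans hratio
    refine ⟨hn1, ?_⟩
    rw [hx]
    nlinarith [mul_le_mul_of_nonneg_left hratio (by positivity : 0 ≤ a / 2),
      mul_le_mul_of_nonneg_right hab hn]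

theorem pow_half_mul_le_of_rec (ha : 0 ≤ a) (hab : 4 * b ≤ a ^ 2)
    (hx : ∀ n, x (n + 2) = a * x (n + 1) - b * x n) (h0 : 0 ≤ x 0) (h1 : a / 2 * x 0 ≤ x 1)
    (n : ℕ) : (a / 2) ^ n * x 0 ≤ x n := by
  induction n with
  | zero => simp
  | succ n ih =>
    calc (a / 2) ^ (n + 1) * x 0 = a / 2 * ((a / 2) ^ n * x 0) := by ring
      _ ≤ a / 2 * x n := by gcongr
      _ ≤ x (n + 1) := (half_mul_le_succ_of_rec ha hab hx h0 h1 n).2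

theorem pos_of_rec_s10 (ha : 0 < a) (hab : 4 * b ≤ a ^ 2)
    (hx : ∀ n, x (n + 2) = a * x (n + 1) - b * x n) (h0 : 0 < x 0) (h1 : a / 2 * x 0 ≤ x 1)
    (n : ℕ) : 0 < x n :=
  (by positivity : 0 < (a / 2) ^ n * x 0).trans_le (pow_half_mul_le_of_rec ha.le hab hx h0.le h1 n)

end LinearRecurrence

section QuarterBound

variable {γ : ℝ}

theorem linRec_one_one_pos (hγ4 : γ ≤ 1 / 4) (n : ℕ) : 0 < linRec 1 γ 1 1 n :=
  pos_of_rec_s10 (x := linRec 1 γ 1 1) one_pos (by linarith) (fun _ => rfl) one_pos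
    (by simp [linRec]; norm_num) n

theorem pow_half_le_linRec_one_one_sub (hγ4 : γ ≤ 1 / 4) (n : ℕ) :
    (1 / 2) ^ n ≤ linRec 1 γ 1 (1 - 2 * γ) n := by
  simpa [linRec] using pow_half_mul_le_of_rec (x := linRec 1 γ 1 (1 - 2 * γ)) zero_le_one
    (by linarith) (fun _ => rfl) zero_le_one (by simp [linRec]; linarith) n

theorem four_mul_pow_le_sq {l : ℕ} (hl : 1 ≤ l) (hγ0 : 0 ≤ γ) (hγ4 : γ ≤ 1 / 4) {y : ℝ}
    (hy : (1 / 2) ^ (l - 1) ≤ y) : 4 * γ ^ l ≤ y ^ 2 := by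
  obtain ⟨k, rfl⟩ : ∃ k, l = k + 1 := ⟨l - 1, by omega⟩
  rw [Nat.add_sub_cancel] at hy
  calc 4 * γ ^ (k + 1) = 4 * γ * γ ^ k := by ring
    _ ≤ 1 * (1 / 4) ^ k := by gcongr; linarith
    _ = ((1 / 2) ^ k) ^ 2 := by rw [one_mul, ← pow_mul, mul_comm, pow_mul]; norm_num
    _ ≤ y ^ 2 := by gcongr

end QuarterBound

structure IsTraceCoeffSeq (l : ℕ) (γ : ℝ) (lam : ℤ → ℝ) : Prop where
  neg : ∀ m : ℤ, m < 0 → lam m = 0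
  zero : lam 0 = 1
  one : lam 1 = 1
  rec_zero : ∀ n : ℕ, 2 ≤ n → n % l = 0 → lam (n : ℤ) = lam ((n : ℤ) - 1)
  rec_one : ∀ n : ℕ, 2 ≤ n → n % l = 1 →
    lam (n : ℤ) = lam ((n : ℤ) - 1) - 2 * γ * lam ((n : ℤ) - 2)
  rec_last : ∀ n : ℕ, 2 ≤ n → n % l = l - 1 →
    lam (n : ℤ) = lam ((n : ℤ) - 1) - γ * lam ((n : ℤ) - 2) - γ ^ l * lam ((n : ℤ) - 2 * l)
  rec_else : ∀ n : ℕ, 2 ≤ n → n % l ≠ 0 → n % l ≠ 1 → n % l ≠ l - 1 →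
    lam (n : ℤ) = lam ((n : ℤ) - 1) - γ * lam ((n : ℤ) - 2)

def blockEnd (lam : ℤ → ℝ) (l m : ℕ) : ℝ := lam (m * l - 1)

namespace IsTraceCoeffSeq

variable {l : ℕ} {γ : ℝ} {lam : ℤ → ℝ}

theorem eq_linRec_of_lt (S : IsTraceCoeffSeq l γ lam) :
    ∀ j, j < l → lam j = linRec 1 γ 1 1 j := by
  refine Nat.twoStepInduction (fun _ => S.zero) (fun _ => S.one) fun j ih₀ ih₁ hj => ?_
  have hmod : (j + 2) % l = j + 2 := Nat.mod_eq_of_lt hj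
  have hstep : lam ((j + 2 : ℕ) : ℤ) = lam ((j + 2 : ℕ) - 1) - γ * lam ((j + 2 : ℕ) - 2) := by
    by_cases hlast : j + 2 = l - 1
    · rw [S.rec_last _ (by omega) (by omega), S.neg ((j + 2 : ℕ) - 2 * l) (by omega)]
      ring
    · exact S.rec_else _ (by omega) (by omega) (by omega) (by omega)
  push_cast at hstep ih₁ ⊢
  rw [hstep, show (j : ℤ) + 2 - 1 = j + 1 by ring, show (j : ℤ) + 2 - 2 = j by ring,
    ih₀ (by omega), ih₁ (by omega), linRec, one_mul]

theorem eq_mul_linRec (S : IsTraceCoeffSeq l γ lam) (hl : 3 ≤ l) {m : ℕ} (hm : 1 ≤ m) :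
    ∀ j, j ≤ l - 2 → lam (m * l + j) = blockEnd lam l m * linRec 1 γ 1 (1 - 2 * γ) j := by
  have hml : l ≤ m * l := Nat.le_mul_of_pos_left l hm
  have hmod : ∀ j < l, (m * l + j) % l = j := fun j hj => by
    rw [Nat.mul_add_mod_self_right, Nat.mod_eq_of_lt hj]
  simp only [blockEnd]
  have h₀ : lam (m * l) = lam (m * l - 1) := by
    exact_mod_cast S.rec_zero (m * l) (by omega) (by simp)
  refine Nat.twoStepInduction (fun _ => ?_) (fun _ => ?_) fun j ih₀ ih₁ hj => ?_
  · simp [linRec, h₀]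
  · have := S.rec_one (m * l + 1) (by omega) (hmod 1 (by omega))
    push_cast at this ⊢
    rw [this, add_sub_cancel_right, show (m : ℤ) * l + 1 - 2 = m * l - 1 by ring, h₀]
    simp only [linRec]; ring
  · have := S.rec_else (m * l + (j + 2)) (by omega) (by rw [hmod _ (by omega)]; omega)
      (by rw [hmod _ (by omega)]; omega) (by rw [hmod _ (by omega)]; omega)
    push_cast at this ih₁ ⊢
    rw [this, show (m : ℤ) * l + (j + 2) - 1 = m * l + (j + 1) by ring,
      show (m : ℤ) * l + (j + 2) - 2 = m * l + j by ring, ih₀ (by omega), ih₁ (by omega)]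
    simp only [linRec]; ring

theorem blockEnd_add_two (S : IsTraceCoeffSeq l γ lam) (hl : 3 ≤ l) (m : ℕ) :
    blockEnd lam l (m + 2) =
      linRec 1 γ 1 (1 - 2 * γ) (l - 1) * blockEnd lam l (m + 1) - γ ^ l * blockEnd lam l m := by
  have hblock := S.eq_mul_linRec hl (m := m + 1) (by omega)
  obtain ⟨k, rfl⟩ : ∃ k, l = k + 3 := ⟨l - 3, by omega⟩
  have hlast := S.rec_last ((m + 1) * (k + 3) + (k + 2)) (by omega)
    (by rw [Nat.mul_add_mod_self_right, Nat.mod_eq_of_lt (by omega)]; rfl)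
  have h₁ := hblock (k + 1) (by omega)
  have h₂ := hblock k (by omega)
  simp only [blockEnd] at *
  push_cast at hlast h₁ h₂ ⊢
  rw [show ((m : ℤ) + 2) * (k + 3) - 1 = (m + 1) * (k + 3) + (k + 2) by ring, hlast,
    show ((m : ℤ) + 1) * (k + 3) + (k + 2) - 1 = (m + 1) * (k + 3) + (k + 1) by ring,
    show ((m : ℤ) + 1) * (k + 3) + (k + 2) - 2 = (m + 1) * (k + 3) + k by ring,
    show ((m : ℤ) + 1) * (k + 3) + (k + 2) - 2 * (k + 3) = m * (k + 3) - 1 by ring, h₁, h₂]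
  simp only [linRec]
  ring

theorem blockEnd_pos (S : IsTraceCoeffSeq l γ lam) (hl : 3 ≤ l) (hγ0 : 0 < γ) (hγ4 : γ ≤ 1 / 4)
    (m : ℕ) : 0 < blockEnd lam l (m + 1) := by
  have hd : (1 / 2) ^ (l - 1) ≤ linRec 1 γ 1 (1 - 2 * γ) (l - 1) :=
    pow_half_le_linRec_one_one_sub hγ4 _
  have hd_pos : 0 < linRec 1 γ 1 (1 - 2 * γ) (l - 1) :=
    (by positivity : (0 : ℝ) < (1 / 2) ^ (l - 1)).trans_le hd
  have h₀ : blockEnd lam l 0 = 0 := S.neg _ (by simp)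
  have h₁ : 0 < blockEnd lam l 1 := by
    have := S.eq_linRec_of_lt (l - 1) (by omega)
    simp only [blockEnd, Nat.cast_one, one_mul]
    rw [show (l : ℤ) - 1 = (l - 1 : ℕ) by omega, this]
    exact linRec_one_one_pos hγ4 _
  refine pos_of_rec_s10 (x := fun m => blockEnd lam l (m + 1)) hd_pos
    (four_mul_pow_le_sq (by omega) hγ0.le hγ4 hd) (fun m => S.blockEnd_add_two hl (m + 1)) h₁ ?_ m
  rw [S.blockEnd_add_two hl 0, h₀]
  nlinarith [mul_pos hd_pos h₁]

theorem pos (S : IsTraceCoeffSeq l γ lam) (hl : 3 ≤ l) (hγ0 : 0 < γ) (hγ4 : γ ≤ 1 / 4) (n : ℕ) :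
    0 < lam n := by
  rcases lt_or_ge n l with hn | hn
  · rw [S.eq_linRec_of_lt n hn]
    exact linRec_one_one_pos hγ4 n
  have hm : 1 ≤ n / l := (Nat.one_le_div_iff (by omega)).2 hn
  have hj : n % l < l := Nat.mod_lt _ (by omega)
  have hdiv : (n : ℤ) = (n / l : ℕ) * l + (n % l : ℕ) := by
    exact_mod_cast (Nat.div_add_mod' n l).symm
  generalize n / l = m at hm hdiv
  generalize n % l = j at hj hdiv
  rw [hdiv]
  by_cases hjl : j = l - 1
  · obtain ⟨m, rfl⟩ : ∃ k, m = k + 1 := ⟨m - 1, by omega⟩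
    have hend := S.blockEnd_pos hl hγ0 hγ4 (m + 1)
    rw [blockEnd] at hend
    convert hend using 2
    rw [hjl, Nat.cast_sub (by omega)]
    push_cast
    ring
  · rw [S.eq_mul_linRec hl hm j (by omega)]
    obtain ⟨m, rfl⟩ : ∃ k, m = k + 1 := ⟨m - 1, by omega⟩
    exact mul_pos (S.blockEnd_pos hl hγ0 hγ4 m)
      ((by positivity : (0 : ℝ) < (1 / 2) ^ j).trans_le (pow_half_le_linRec_one_one_sub hγ4 j))

end IsTraceCoeffSeq

/-- For `l ≥ 3` and `0 < γ ≤ 1/4`, all the root-of-unity trace coefficients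
`λ_n` are positive. -/
theorem stmt_10 (l : ℕ) (hl : 3 ≤ l) (γ : ℝ) (hγ0 : 0 < γ) (hγ4 : γ ≤ 1 / 4)
    (lam : ℤ → ℝ)
    (hlneg : ∀ m : ℤ, m < 0 → lam m = 0)
    (hl0 : lam 0 = 1) (hl1 : lam 1 = 1)
    (hrec0 : ∀ n : ℕ, 2 ≤ n → n % l = 0 → lam (n : ℤ) = lam ((n : ℤ) - 1))
    (hrec1 : ∀ n : ℕ, 2 ≤ n → n % l = 1 →
      lam (n : ℤ) = lam ((n : ℤ) - 1) - 2 * γ * lam ((n : ℤ) - 2))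
    (hrecl : ∀ n : ℕ, 2 ≤ n → n % l = l - 1 →
      lam (n : ℤ) = lam ((n : ℤ) - 1) - γ * lam ((n : ℤ) - 2) - γ ^ l * lam ((n : ℤ) - 2 * l))
    (hrece : ∀ n : ℕ, 2 ≤ n → n % l ≠ 0 → n % l ≠ 1 → n % l ≠ l - 1 →
      lam (n : ℤ) = lam ((n : ℤ) - 1) - γ * lam ((n : ℤ) - 2)) :
    ∀ n : ℕ, 0 < lam (n : ℤ) :=
  (IsTraceCoeffSeq.mk hlneg hl0 hl1 hrec0 hrec1 hrecl hrece).pos hl hγ0 hγ4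
end

section
/- Fix l = 2 and let γ ∈ ℝ with 0 < γ ≤ 1/4. Then λ_n > 0 for every n ≥ 1. -/
/-!
The odd terms `a n = λ_{2n+1}` satisfy `a (n+2) = (1 - 2γ) a (n+1) - γ² a n`, because each even
term repeats the odd term before it. The characteristic polynomial `x² - (1 - 2γ) x + γ²` takes
the value `γ (4γ - 1) ≤ 0` at `γ`, so the ratio `a (n+1) / a n` never drops below `γ`: from
`γ a n ≤ a (n+1)` one gets `a (n+2) - γ a (n+1) = (1 - 3γ) a (n+1) - γ² a n ≥ 0`. Hence all odd
terms, and with them all even ones, are positive.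
-/

theorem pos_and_mul_le_succ_of_charPoly_nonpos {a : ℕ → ℝ} {b c r : ℝ} (hr : 0 < r) (hc : 0 ≤ c)
    (hchar : r ^ 2 - b * r + c ≤ 0) (hrec : ∀ n, a (n + 2) = b * a (n + 1) - c * a n)
    (h0 : 0 < a 0) (h1 : r * a 0 ≤ a 1) : ∀ n, 0 < a n ∧ r * a n ≤ a (n + 1) := by
  intro n
  induction n with
  | zero => exact ⟨h0, h1⟩
  | succ n ih =>
    obtain ⟨hpos, hle⟩ := ih
    have hb : 0 ≤ b - r := by nlinarith
    refine ⟨lt_of_lt_of_le (mul_pos hr hpos) hle, ?_⟩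
    calc r * a (n + 1) ≤ r * a (n + 1) + ((b - r) * a (n + 1) - c * a n) := by
          nlinarith [mul_le_mul_of_nonneg_left hle hb]
      _ = a (n + 2) := by rw [hrec]; ring

theorem lam_odd_succ_succ {γ : ℝ} {lam : ℤ → ℝ}
    (hrec1 : ∀ n : ℕ, 1 ≤ n →
      lam (2 * (n : ℤ) + 1) =
        lam (2 * (n : ℤ)) - 2 * γ * lam (2 * (n : ℤ) - 1) - γ ^ 2 * lam (2 * (n : ℤ) - 3))
    (hrec2 : ∀ n : ℕ, 1 ≤ n → lam (2 * (n : ℤ) + 2) = lam (2 * (n : ℤ) + 1)) (n : ℕ) :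
    lam (2 * ((n + 2 : ℕ) : ℤ) + 1) =
      (1 - 2 * γ) * lam (2 * ((n + 1 : ℕ) : ℤ) + 1) - γ ^ 2 * lam (2 * (n : ℤ) + 1) := by
  have h1 := hrec1 (n + 2) (by omega)
  have h2 : lam (2 * ((n : ℤ) + 2)) = lam (2 * ((n : ℤ) + 1) + 1) := by
    have h := hrec2 (n + 1) (by omega)
    push_cast at h
    rw [← h]; ring_nf
  push_cast at h1 ⊢
  rw [h1, h2, show 2 * ((n : ℤ) + 2) - 1 = 2 * ((n : ℤ) + 1) + 1 by ring,
    show 2 * ((n : ℤ) + 2) - 3 = 2 * (n : ℤ) + 1 by ring]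
  ring

/-- For `l = 2` (the case `δ = 0`) and `0 < γ ≤ 1/4`, the root-of-unity trace
coefficients `λ_n` are positive for all `n ≥ 1`. -/
theorem stmt_11 (γ : ℝ) (hγ0 : 0 < γ) (hγ4 : γ ≤ 1 / 4)
    (lam : ℤ → ℝ)
    (hlm1 : lam (-1) = 0)
    (hl1 : lam 1 = 1) (hl2 : lam 2 = 1)
    (hrec1 : ∀ n : ℕ, 1 ≤ n →
      lam (2 * (n : ℤ) + 1) =
        lam (2 * (n : ℤ)) - 2 * γ * lam (2 * (n : ℤ) - 1) - γ ^ 2 * lam (2 * (n : ℤ) - 3))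
    (hrec2 : ∀ n : ℕ, 1 ≤ n → lam (2 * (n : ℤ) + 2) = lam (2 * (n : ℤ) + 1)) :
    ∀ n : ℕ, 1 ≤ n → 0 < lam (n : ℤ) := by
  have hl3 : lam 3 = 1 - 2 * γ := by
    have h := hrec1 1 le_rfl
    norm_num [hl1, hl2, hlm1] at h
    linarith
  have hodd : ∀ k : ℕ, 0 < lam (2 * (k : ℤ) + 1) := fun k =>
    (pos_and_mul_le_succ_of_charPoly_nonpos (a := fun k : ℕ => lam (2 * (k : ℤ) + 1)) hγ0
      (sq_nonneg γ) (by nlinarith) (lam_odd_succ_succ hrec1 hrec2) (by norm_num [hl1])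
      (by norm_num [hl1, hl3]; linarith) k).1
  intro m hm
  obtain ⟨k, rfl | rfl⟩ := Nat.even_or_odd' m
  · obtain ⟨j, rfl⟩ : ∃ j, k = j + 1 := ⟨k - 1, by omega⟩
    rcases Nat.eq_zero_or_pos j with rfl | hj
    · norm_num [hl2]
    · push_cast
      rw [show 2 * ((j : ℤ) + 1) = 2 * (j : ℤ) + 2 by ring, hrec2 j hj]
      exact hodd j
  · push_cast
    exact hodd k
end

section
/- Fix integers l ≥ 3 and k ≥ 2, and let γ = 1/(4·cos²(π/(kl))). Then λ_i > 0 for all 0 ≤ i < kl − 1, and λ_{kl−1} = 0. -/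
/-!
Put `c = 2 cos θ`, so that `γ c² = 1`. The rescaled sequence `μ n = sin θ · cⁿ · λ n` satisfies
`μ n = c μ (n - 1) - μ (n - 2)` at the generic positions, the recurrence solved by `sin ((n + 1) θ)`.
Writing `n = m l + j` with `j < l`, the boundary rules at `j = 0, 1` of a block `m ≥ 1` add the
reflected wave `sin ((m l - j - 1) θ)`. At the last position `j = l - 1` of block `m` the term
`γˡ λ (n - 2l)` becomes `μ (n - 2l) = sin ((m - 1) l θ)`, which is exactly the value the reflected
wave would have there, so the wave is switched off again.

For `θ = π / (k l)` both waves are nonnegative below `k l - 1`, the first strictly, and at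
`n = k l - 1` only `sin (k l θ) = sin π = 0` remains.
-/

open Real

structure IsLambdaSeq (l : ℕ) (γ : ℝ) (lam : ℤ → ℝ) : Prop where
  neg : ∀ m : ℤ, m < 0 → lam m = 0
  zero : lam 0 = 1
  one : lam 1 = 1
  rec_mod_zero : ∀ n : ℕ, 2 ≤ n → n % l = 0 → lam (n : ℤ) = lam ((n : ℤ) - 1)
  rec_mod_one : ∀ n : ℕ, 2 ≤ n → n % l = 1 →
    lam (n : ℤ) = lam ((n : ℤ) - 1) - 2 * γ * lam ((n : ℤ) - 2)
  rec_mod_pred : ∀ n : ℕ, 2 ≤ n → n % l = l - 1 →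
    lam (n : ℤ) = lam ((n : ℤ) - 1) - γ * lam ((n : ℤ) - 2) - γ ^ l * lam ((n : ℤ) - 2 * l)
  rec_other : ∀ n : ℕ, 2 ≤ n → n % l ≠ 0 → n % l ≠ 1 → n % l ≠ l - 1 →
    lam (n : ℤ) = lam ((n : ℤ) - 1) - γ * lam ((n : ℤ) - 2)

noncomputable def scaledLam (θ : ℝ) (lam : ℤ → ℝ) (n : ℕ) : ℝ :=
  sin θ * (2 * cos θ) ^ n * lam n

noncomputable def closedForm (l : ℕ) (θ : ℝ) (m j : ℕ) : ℝ :=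
  sin ((m * l + j + 1) * θ) + if j + 1 = l ∨ m = 0 then 0 else sin ((m * l - j - 1) * θ)

lemma two_cos_mul_sin (θ x : ℝ) :
    2 * cos θ * sin (x * θ) = sin ((x + 1) * θ) + sin ((x - 1) * θ) := by
  rw [add_mul, sub_mul, one_mul, sin_add, sin_sub]; ring

section closedForm

variable {l : ℕ} {θ : ℝ}

lemma closedForm_block_start (hl : 2 ≤ l) {p : ℕ} (hp : p + 1 = l) (m : ℕ) :
    closedForm l θ (m + 1) 0 = 2 * cos θ * closedForm l θ m p := by
  rw [closedForm, closedForm, if_neg (by omega), if_pos (Or.inl hp)]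
  subst hp
  push_cast
  linear_combination (norm := ring_nf) -(two_cos_mul_sin θ ((m + 1) * (p + 1)))

lemma closedForm_block_second (hl : 3 ≤ l) {p : ℕ} (hp : p + 1 = l) (m : ℕ) :
    closedForm l θ (m + 1) 1 =
      2 * cos θ * closedForm l θ (m + 1) 0 - 2 * closedForm l θ m p := by
  rw [closedForm, closedForm, closedForm, if_neg (by omega), if_neg (by omega),
    if_pos (Or.inl hp)]
  subst hp
  push_cast
  linear_combination (norm := ring_nf) -(two_cos_mul_sin θ ((m + 1) * (p + 1) + 1))
    - two_cos_mul_sin θ ((m + 1) * (p + 1) - 1)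

lemma closedForm_block_interior {i : ℕ} (hi : i + 3 < l) (m : ℕ) :
    closedForm l θ m (i + 2) = 2 * cos θ * closedForm l θ m (i + 1) - closedForm l θ m i := by
  simp only [closedForm, show i + 2 + 1 ≠ l by omega, show i + 1 + 1 ≠ l by omega,
    show i + 1 ≠ l by omega, false_or]
  push_cast
  split_ifs
  · linear_combination (norm := ring_nf) -(two_cos_mul_sin θ (m * l + i + 2))
  · linear_combination (norm := ring_nf) -(two_cos_mul_sin θ (m * l + i + 2))
      - two_cos_mul_sin θ (m * l - i - 2)

lemma closedForm_block_last_of_lt_two {i : ℕ} (hi : i + 3 = l) {m : ℕ} (hm : m < 2) :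
    closedForm l θ m (i + 2) = 2 * cos θ * closedForm l θ m (i + 1) - closedForm l θ m i := by
  simp only [closedForm, show i + 2 + 1 = l by omega, show i + 1 + 1 ≠ l by omega,
    show i + 1 ≠ l by omega, true_or, false_or, if_true]
  subst hi
  interval_cases m
  · push_cast
    linear_combination (norm := ring_nf) -(two_cos_mul_sin θ (i + 2))
  · push_cast
    linear_combination (norm := ring_nf) -(two_cos_mul_sin θ (2 * i + 5))
      - two_cos_mul_sin θ 1 - sin_zero

lemma closedForm_block_last {i : ℕ} (hi : i + 3 = l) (m : ℕ) :
    closedForm l θ (m + 2) (i + 2) =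
      2 * cos θ * closedForm l θ (m + 2) (i + 1) - closedForm l θ (m + 2) i -
        closedForm l θ m (i + 2) := by
  simp only [closedForm, show i + 2 + 1 = l by omega, show i + 1 + 1 ≠ l by omega,
    show i + 1 ≠ l by omega, true_or, false_or, if_true, add_eq_zero, two_ne_zero, and_false,
    if_false]
  subst hi
  push_cast
  linear_combination (norm := ring_nf) -(two_cos_mul_sin θ ((m + 2) * (i + 3) + i + 2))
    - two_cos_mul_sin θ ((m + 1) * (i + 3) + 1)

lemma closedForm_pos {k m j : ℕ} (hθ : 0 < θ) (hπ : θ * (k * l) = π) (hj : j < l)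
    (hlt : m * l + j + 1 < k * l) : 0 < closedForm l θ m j := by
  have hlt' : ((m * l + j + 1 : ℕ) : ℝ) < k * l := by exact_mod_cast hlt
  push_cast at hlt'
  have hwave : 0 < sin ((m * l + j + 1) * θ) :=
    sin_pos_of_pos_of_lt_pi (by positivity) (by nlinarith)
  rw [closedForm]
  split_ifs with hcase
  · linarith
  · rw [not_or] at hcase
    have hjm : (j : ℝ) + 1 ≤ m * l := by
      exact_mod_cast (show j + 1 ≤ m * l by nlinarith [Nat.pos_of_ne_zero hcase.2])
    have hreflected : 0 ≤ sin ((m * l - j - 1) * θ) :=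
      sin_nonneg_of_nonneg_of_le_pi (by nlinarith) (by nlinarith)
    linarith

lemma closedForm_eq_zero {k m p : ℕ} (hm : m + 1 = k) (hp : p + 1 = l)
    (hπ : θ * (k * l) = π) : closedForm l θ m p = 0 := by
  have harg : ((m : ℝ) * l + p + 1) * θ = π := by
    rw [← hπ, ← hm, ← hp]; push_cast; ring
  rw [closedForm, if_pos (Or.inl hp), add_zero, harg, sin_pi]

end closedForm

namespace IsLambdaSeq

variable {l : ℕ} {γ θ : ℝ} {lam : ℤ → ℝ}

lemma scaledLam_block_start (h : IsLambdaSeq l γ lam) (hl : 2 ≤ l) {p : ℕ} (hp : p + 1 = l)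
    (m : ℕ) : scaledLam θ lam ((m + 1) * l) = 2 * cos θ * scaledLam θ lam (m * l + p) := by
  subst hp
  have hrec := h.rec_mod_zero ((m + 1) * (p + 1)) (by nlinarith) (Nat.mul_mod_left _ _)
  rw [show (((m + 1) * (p + 1) : ℕ) : ℤ) - 1 = ((m * (p + 1) + p : ℕ) : ℤ) by push_cast; ring]
    at hrec
  rw [scaledLam, scaledLam, hrec]
  ring

lemma scaledLam_block_second (h : IsLambdaSeq l γ lam) (hγ : γ * (2 * cos θ) ^ 2 = 1)
    (hl : 3 ≤ l) {p : ℕ} (hp : p + 1 = l) (m : ℕ) :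
    scaledLam θ lam ((m + 1) * l + 1) =
      2 * cos θ * scaledLam θ lam ((m + 1) * l) - 2 * scaledLam θ lam (m * l + p) := by
  subst hp
  have hrec := h.rec_mod_one ((m + 1) * (p + 1) + 1) (by nlinarith)
    (Nat.mul_add_mod_of_lt (by omega))
  rw [show (((m + 1) * (p + 1) + 1 : ℕ) : ℤ) - 1 = (((m + 1) * (p + 1) : ℕ) : ℤ) by push_cast; ring,
    show (((m + 1) * (p + 1) + 1 : ℕ) : ℤ) - 2 = ((m * (p + 1) + p : ℕ) : ℤ) by push_cast; ring]
    at hrec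
  rw [scaledLam, scaledLam, scaledLam, hrec]
  linear_combination (-2 * sin θ * (2 * cos θ) ^ (m * (p + 1) + p) *
    lam ((m * (p + 1) + p : ℕ) : ℤ)) * hγ

lemma scaledLam_block_interior (h : IsLambdaSeq l γ lam) (hγ : γ * (2 * cos θ) ^ 2 = 1)
    {i : ℕ} (hi : i + 3 < l) (m : ℕ) :
    scaledLam θ lam (m * l + (i + 2)) =
      2 * cos θ * scaledLam θ lam (m * l + (i + 1)) - scaledLam θ lam (m * l + i) := by
  have hmod : (m * l + (i + 2)) % l = i + 2 := Nat.mul_add_mod_of_lt (by omega)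
  have hrec := h.rec_other (m * l + (i + 2)) (by omega) (by omega) (by omega) (by omega)
  rw [show ((m * l + (i + 2) : ℕ) : ℤ) - 1 = ((m * l + (i + 1) : ℕ) : ℤ) by push_cast; ring,
    show ((m * l + (i + 2) : ℕ) : ℤ) - 2 = ((m * l + i : ℕ) : ℤ) by push_cast; ring] at hrec
  rw [scaledLam, scaledLam, scaledLam, hrec]
  linear_combination (-sin θ * (2 * cos θ) ^ (m * l + i) * lam ((m * l + i : ℕ) : ℤ)) * hγ

lemma scaledLam_block_last_of_lt_two (h : IsLambdaSeq l γ lam) (hγ : γ * (2 * cos θ) ^ 2 = 1)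
    {i : ℕ} (hi : i + 3 = l) {m : ℕ} (hm : m < 2) :
    scaledLam θ lam (m * l + (i + 2)) =
      2 * cos θ * scaledLam θ lam (m * l + (i + 1)) - scaledLam θ lam (m * l + i) := by
  have hmod : (m * l + (i + 2)) % l = l - 1 := by rw [Nat.mul_add_mod_of_lt (by omega)]; omega
  have hrec := h.rec_mod_pred (m * l + (i + 2)) (by omega) hmod
  rw [show ((m * l + (i + 2) : ℕ) : ℤ) - 1 = ((m * l + (i + 1) : ℕ) : ℤ) by push_cast; ring,
    show ((m * l + (i + 2) : ℕ) : ℤ) - 2 = ((m * l + i : ℕ) : ℤ) by push_cast; ring,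
    h.neg ((m * l + (i + 2) : ℕ) - 2 * l) (by interval_cases m <;> push_cast <;> omega)] at hrec
  rw [scaledLam, scaledLam, scaledLam, hrec]
  linear_combination (-sin θ * (2 * cos θ) ^ (m * l + i) * lam ((m * l + i : ℕ) : ℤ)) * hγ

lemma scaledLam_block_last (h : IsLambdaSeq l γ lam) (hγ : γ * (2 * cos θ) ^ 2 = 1)
    {i : ℕ} (hi : i + 3 = l) (m : ℕ) :
    scaledLam θ lam ((m + 2) * l + (i + 2)) =
      2 * cos θ * scaledLam θ lam ((m + 2) * l + (i + 1)) -
        scaledLam θ lam ((m + 2) * l + i) - scaledLam θ lam (m * l + (i + 2)) := by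
  have hmod : ((m + 2) * l + (i + 2)) % l = l - 1 := by
    rw [Nat.mul_add_mod_of_lt (by omega)]; omega
  have hrec := h.rec_mod_pred ((m + 2) * l + (i + 2)) (by omega) hmod
  rw [show (((m + 2) * l + (i + 2) : ℕ) : ℤ) - 1 = (((m + 2) * l + (i + 1) : ℕ) : ℤ) by
      push_cast; ring,
    show (((m + 2) * l + (i + 2) : ℕ) : ℤ) - 2 = (((m + 2) * l + i : ℕ) : ℤ) by push_cast; ring,
    show (((m + 2) * l + (i + 2) : ℕ) : ℤ) - 2 * l = ((m * l + (i + 2) : ℕ) : ℤ) by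
      push_cast; ring] at hrec
  have hγl : γ ^ l * (2 * cos θ) ^ (2 * l) = 1 := by rw [pow_mul, ← mul_pow, hγ, one_pow]
  rw [scaledLam, scaledLam, scaledLam, scaledLam, hrec]
  linear_combination
    (-sin θ * (2 * cos θ) ^ ((m + 2) * l + i) * lam (((m + 2) * l + i : ℕ) : ℤ)) * hγ
      - (sin θ * (2 * cos θ) ^ (m * l + (i + 2)) * lam ((m * l + (i + 2) : ℕ) : ℤ)) * hγl

theorem scaledLam_eq_closedForm (h : IsLambdaSeq l γ lam) (hl : 3 ≤ l)
    (hγ : γ * (2 * cos θ) ^ 2 = 1) (m j : ℕ) (hj : j < l) :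
    scaledLam θ lam (m * l + j) = closedForm l θ m j := by
  induction m using Nat.strong_induction_on generalizing j with
  | _ m ihm =>
  induction j using Nat.strong_induction_on with
  | _ j ihj =>
  have hp : l - 1 + 1 = l := by omega
  match m, j with
  | 0, 0 => simp [scaledLam, closedForm, h.zero]
  | 0, 1 =>
    simp only [scaledLam, closedForm, zero_mul, zero_add, pow_one, Nat.cast_one, Nat.cast_zero,
      h.one, one_add_one_eq_two, sin_two_mul, or_true, if_true, add_zero]
    ring
  | m + 1, 0 =>
    rw [add_zero, h.scaledLam_block_start (by omega) hp, ihm m (by omega) _ (by omega),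
      closedForm_block_start (by omega) hp]
  | m + 1, 1 =>
    rw [h.scaledLam_block_second hγ hl hp, closedForm_block_second hl hp,
      ihm m (by omega) _ (by omega), ← ihj 0 (by omega) (by omega), add_zero]
  | m, i + 2 =>
    obtain hi | hi := lt_or_eq_of_le (show i + 3 ≤ l by omega)
    · rw [h.scaledLam_block_interior hγ hi, ihj (i + 1) (by omega) (by omega),
        ihj i (by omega) (by omega), closedForm_block_interior hi]
    · obtain hm | hm := lt_or_ge m 2
      · rw [h.scaledLam_block_last_of_lt_two hγ hi hm, ihj (i + 1) (by omega) (by omega),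
          ihj i (by omega) (by omega), closedForm_block_last_of_lt_two hi hm]
      · obtain ⟨m, rfl⟩ := Nat.exists_eq_add_of_le' hm
        rw [h.scaledLam_block_last hγ hi, ihj (i + 1) (by omega) (by omega),
          ihj i (by omega) (by omega), ihm m (by omega) _ (by omega), closedForm_block_last hi]

end IsLambdaSeq

lemma pos_of_scaledLam_pos {θ : ℝ} {lam : ℤ → ℝ} {n : ℕ} (hs : 0 < sin θ) (hc : 0 < cos θ)
    (h : 0 < scaledLam θ lam n) : 0 < lam n :=
  (mul_pos_iff_of_pos_left (by positivity)).1 h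

lemma eq_zero_of_scaledLam_eq_zero {θ : ℝ} {lam : ℤ → ℝ} {n : ℕ} (hs : sin θ ≠ 0)
    (hc : cos θ ≠ 0) (h : scaledLam θ lam n = 0) : lam n = 0 := by
  simpa [scaledLam, hs, hc] using h

/-- For `l ≥ 3`, `k ≥ 2` and `γ = 1/(4 cos²(π/(kl)))`: `λ_i > 0` for
`0 ≤ i < kl - 1` and `λ_{kl-1} = 0`. -/
theorem stmt_12 (l k : ℕ) (hl : 3 ≤ l) (hk : 2 ≤ k)
    (γ : ℝ) (hγ : γ = 1 / (4 * Real.cos (Real.pi / (k * l)) ^ 2))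
    (lam : ℤ → ℝ)
    (hlneg : ∀ m : ℤ, m < 0 → lam m = 0)
    (hl0 : lam 0 = 1) (hl1 : lam 1 = 1)
    (hrec0 : ∀ n : ℕ, 2 ≤ n → n % l = 0 → lam (n : ℤ) = lam ((n : ℤ) - 1))
    (hrec1 : ∀ n : ℕ, 2 ≤ n → n % l = 1 →
      lam (n : ℤ) = lam ((n : ℤ) - 1) - 2 * γ * lam ((n : ℤ) - 2))
    (hrecl : ∀ n : ℕ, 2 ≤ n → n % l = l - 1 →
      lam (n : ℤ) = lam ((n : ℤ) - 1) - γ * lam ((n : ℤ) - 2) - γ ^ l * lam ((n : ℤ) - 2 * l))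
    (hrece : ∀ n : ℕ, 2 ≤ n → n % l ≠ 0 → n % l ≠ 1 → n % l ≠ l - 1 →
      lam (n : ℤ) = lam ((n : ℤ) - 1) - γ * lam ((n : ℤ) - 2)) :
    (∀ i : ℕ, i < k * l - 1 → 0 < lam (i : ℤ)) ∧ lam ((k * l : ℕ) - 1 : ℤ) = 0 := by
  have hseq : IsLambdaSeq l γ lam := ⟨hlneg, hl0, hl1, hrec0, hrec1, hrecl, hrece⟩
  set θ := π / (k * l)
  have hkl : (6 : ℝ) ≤ k * l := by exact_mod_cast Nat.mul_le_mul hk hl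
  have hθ : 0 < θ := by positivity
  have hπ : θ * (k * l) = π := div_mul_cancel₀ _ (by positivity)
  have hsin : 0 < sin θ := sin_pos_of_pos_of_lt_pi hθ (by nlinarith [pi_pos])
  have hcos : 0 < cos θ := cos_pos_of_mem_Ioo ⟨by linarith [pi_pos], by nlinarith [pi_pos]⟩
  have hγθ : γ * (2 * cos θ) ^ 2 = 1 := by rw [hγ]; field_simp; ring
  have hclosed := hseq.scaledLam_eq_closedForm hl hγθ
  refine ⟨fun i hi => ?_, ?_⟩
  · rw [← Nat.div_add_mod' i l]
    refine pos_of_scaledLam_pos hsin hcos ?_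
    rw [hclosed _ _ (Nat.mod_lt _ (by omega))]
    exact closedForm_pos hθ hπ (Nat.mod_lt _ (by omega)) (by rw [Nat.div_add_mod']; omega)
  · have hidx : k * l - 1 = (k - 1) * l + (l - 1) := by
      rw [Nat.sub_one_mul]; have := Nat.le_mul_of_pos_left l (by omega : 0 < k); omega
    rw [show ((k * l : ℕ) : ℤ) - 1 = ((k * l - 1 : ℕ) : ℤ) by omega, hidx]
    refine eq_zero_of_scaledLam_eq_zero hsin.ne' hcos.ne' ?_
    rw [hclosed _ _ (by omega)]
    exact closedForm_eq_zero (by omega) (by omega) hπ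
end

section
/- Fix l = 2, let n ≥ 3 be odd, and let γ = 1/(4·cos²(π/(n+1))). Then λ_i > 0 for all 1 ≤ i < n, and λ_n = 0. -/
/-!
Writing `μ_m := λ_{2m-1}`, the relation `λ_{2m} = λ_{2m-1}` turns the defining recurrence into
`μ_{m+2} = (1 - 2γ) μ_{m+1} - γ² μ_m` with `μ_0 = 0`, `μ_1 = 1`. For `γ = 1/(4 cos²(φ/2))` one has
`1 - 2γ = 2γ cos φ`, so `μ` is a rescaled Chebyshev sequence: `γ sin φ · μ_m = γ^m sin(mφ)`.
With `φ = 2π/(n+1)` the factor `sin(mφ)` is positive for `2m < n + 1` and vanishes at `2m = n + 1`.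
-/

open Real

theorem mul_sin_mul_eq_of_recurrence {u : ℕ → ℝ} {r φ : ℝ} (h0 : u 0 = 0) (h1 : u 1 = 1)
    (hrec : ∀ m, u (m + 2) = 2 * r * cos φ * u (m + 1) - r ^ 2 * u m) (m : ℕ) :
    r * sin φ * u m = r ^ m * sin (m * φ) := by
  induction m using Nat.twoStepInduction with
  | zero => simp [h0]
  | one => simp [h1]
  | more m ih₀ ih₁ =>
    have hsin : sin ((m + 2 : ℕ) * φ) = 2 * cos φ * sin ((m + 1 : ℕ) * φ) - sin (m * φ) := by
      push_cast
      rw [show ((m : ℝ) + 2) * φ = (m + 1) * φ + φ by ring,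
        show (m : ℝ) * φ = (m + 1) * φ - φ by ring, sin_add, sin_sub]
      ring
    rw [hrec, hsin]
    linear_combination 2 * r * cos φ * ih₁ - r ^ 2 * ih₀

theorem cos_pi_div_pos {x : ℝ} (hx : 2 < x) : 0 < cos (π / x) := by
  have : 0 < π / x := div_pos pi_pos (by linarith)
  exact cos_pos_of_mem_Ioo ⟨by linarith [pi_pos], div_lt_div_of_pos_left pi_pos two_pos hx⟩

theorem sin_natCast_mul_two_mul_pi_div_pos {m : ℕ} {x : ℝ} (hm : 1 ≤ m) (hmx : 2 * m < x) :
    0 < sin (m * (2 * (π / x))) := by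
  have hm' : (1 : ℝ) ≤ m := by exact_mod_cast hm
  have hx : 0 < x := by linarith
  apply sin_pos_of_pos_of_lt_pi (by positivity)
  rw [← mul_assoc, mul_div_assoc', div_lt_iff₀ hx]
  nlinarith [pi_pos]

section TemperleyLiebTrace

variable {γ : ℝ} {lam : ℤ → ℝ}

theorem lam_two_mul_eq_lam_two_mul_sub_one (hl1 : lam 1 = 1) (hl2 : lam 2 = 1)
    (hrec2 : ∀ m : ℕ, 1 ≤ m → lam (2 * (m : ℤ) + 2) = lam (2 * (m : ℤ) + 1))
    (k : ℕ) (hk : 1 ≤ k) : lam (2 * (k : ℤ)) = lam (2 * (k : ℤ) - 1) := by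
  obtain ⟨j, rfl⟩ := Nat.exists_eq_add_of_le' hk
  rcases Nat.eq_zero_or_pos j with rfl | hj
  · norm_num [hl1, hl2]
  · convert hrec2 j hj using 2 <;> push_cast <;> ring

theorem lam_natCast_eq_lam_odd (hl1 : lam 1 = 1) (hl2 : lam 2 = 1)
    (hrec2 : ∀ m : ℕ, 1 ≤ m → lam (2 * (m : ℤ) + 2) = lam (2 * (m : ℤ) + 1))
    (i : ℕ) (hi : 1 ≤ i) : lam i = lam (2 * (((i + 1) / 2 : ℕ) : ℤ) - 1) := by
  rcases Nat.even_or_odd' i with ⟨m, rfl | rfl⟩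
  · rw [show (2 * m + 1) / 2 = m by omega, ← lam_two_mul_eq_lam_two_mul_sub_one hl1 hl2 hrec2 m
      (by omega)]
    push_cast; rfl
  · rw [show (2 * m + 1 + 1) / 2 = m + 1 by omega]
    push_cast; ring_nf

theorem lam_odd_recurrence (hl1 : lam 1 = 1) (hl2 : lam 2 = 1)
    (hrec1 : ∀ m : ℕ, 1 ≤ m →
      lam (2 * (m : ℤ) + 1) =
        lam (2 * (m : ℤ)) - 2 * γ * lam (2 * (m : ℤ) - 1) - γ ^ 2 * lam (2 * (m : ℤ) - 3))
    (hrec2 : ∀ m : ℕ, 1 ≤ m → lam (2 * (m : ℤ) + 2) = lam (2 * (m : ℤ) + 1)) (m : ℕ) :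
    lam (2 * ((m + 2 : ℕ) : ℤ) - 1) =
      (1 - 2 * γ) * lam (2 * ((m + 1 : ℕ) : ℤ) - 1) - γ ^ 2 * lam (2 * (m : ℤ) - 1) := by
  have h := hrec1 (m + 1) (by omega)
  rw [lam_two_mul_eq_lam_two_mul_sub_one hl1 hl2 hrec2 (m + 1) (by omega)] at h
  convert h using 2 <;> push_cast <;> ring_nf

theorem mul_sin_mul_lam_odd_eq {φ : ℝ} (hγφ : γ * (2 + 2 * cos φ) = 1)
    (hlm1 : lam (-1) = 0) (hl1 : lam 1 = 1) (hl2 : lam 2 = 1)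
    (hrec1 : ∀ m : ℕ, 1 ≤ m →
      lam (2 * (m : ℤ) + 1) =
        lam (2 * (m : ℤ)) - 2 * γ * lam (2 * (m : ℤ) - 1) - γ ^ 2 * lam (2 * (m : ℤ) - 3))
    (hrec2 : ∀ m : ℕ, 1 ≤ m → lam (2 * (m : ℤ) + 2) = lam (2 * (m : ℤ) + 1)) (m : ℕ) :
    γ * sin φ * lam (2 * (m : ℤ) - 1) = γ ^ m * sin (m * φ) := by
  refine mul_sin_mul_eq_of_recurrence (u := fun m : ℕ => lam (2 * (m : ℤ) - 1))
    (by simpa using hlm1) (by simpa using hl1) (fun m => ?_) m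
  rw [lam_odd_recurrence hl1 hl2 hrec1 hrec2 m]
  linear_combination -lam (2 * ((m + 1 : ℕ) : ℤ) - 1) * hγφ

end TemperleyLiebTrace

/-- For `l = 2`, `n ≥ 3` odd and `γ = 1/(4 cos²(π/(n+1)))`: `λ_i > 0` for
`1 ≤ i < n` and `λ_n = 0`. -/
theorem stmt_14 (n : ℕ) (hn : 3 ≤ n) (hodd : Odd n)
    (γ : ℝ) (hγ : γ = 1 / (4 * Real.cos (Real.pi / (n + 1)) ^ 2))
    (lam : ℤ → ℝ)
    (hlm1 : lam (-1) = 0)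
    (hl1 : lam 1 = 1) (hl2 : lam 2 = 1)
    (hrec1 : ∀ m : ℕ, 1 ≤ m →
      lam (2 * (m : ℤ) + 1) =
        lam (2 * (m : ℤ)) - 2 * γ * lam (2 * (m : ℤ) - 1) - γ ^ 2 * lam (2 * (m : ℤ) - 3))
    (hrec2 : ∀ m : ℕ, 1 ≤ m → lam (2 * (m : ℤ) + 2) = lam (2 * (m : ℤ) + 1)) :
    (∀ i : ℕ, 1 ≤ i → i < n → 0 < lam (i : ℤ)) ∧ lam (n : ℤ) = 0 := by
  set θ : ℝ := π / (n + 1)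
  have hsin_pos (m : ℕ) (hm : 1 ≤ m) (hmn : 2 * m < n + 1) : 0 < sin (m * (2 * θ)) :=
    sin_natCast_mul_two_mul_pi_div_pos hm (by exact_mod_cast hmn)
  have hcos : 0 < cos θ := cos_pi_div_pos (by norm_cast; omega)
  have hγ_pos : 0 < γ := by rw [hγ]; positivity
  have hγφ : γ * (2 + 2 * cos (2 * θ)) = 1 := by
    rw [hγ, cos_two_mul]; field_simp; ring
  have hclosed := mul_sin_mul_lam_odd_eq hγφ hlm1 hl1 hl2 hrec1 hrec2
  have hfactor_pos : 0 < γ * sin (2 * θ) :=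
    mul_pos hγ_pos (by simpa using hsin_pos 1 le_rfl (by omega))
  refine ⟨fun i hi hin => ?_, ?_⟩
  · rw [lam_natCast_eq_lam_odd hl1 hl2 hrec2 i hi]
    refine pos_of_mul_pos_right ?_ hfactor_pos.le
    rw [hclosed]
    exact mul_pos (pow_pos hγ_pos _) (hsin_pos _ (by omega) (by omega))
  · rw [lam_natCast_eq_lam_odd hl1 hl2 hrec2 n (by omega)]
    refine (mul_eq_zero.mp ?_).resolve_left hfactor_pos.ne'
    obtain ⟨k, rfl⟩ := hodd
    have hπ : ((k + 1 : ℕ) : ℝ) * (2 * θ) = π := by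
      simp only [θ]; push_cast; field_simp; ring
    rw [hclosed, show (2 * k + 1 + 1) / 2 = k + 1 by omega, hπ, sin_pi, mul_zero]
end

section
/- Fix an integer l ≥ 3 and an integer n with 2 ≤ n ≤ l − 1, and let γ = 1/(4·cos²(π/(n+1))). Then λ_i > 0 for all 0 ≤ i < n, and λ_n = 0. -/
/-!
Up to index `l - 1` the special cases of the recurrence collapse: for `2 ≤ m ≤ l - 1` we
have `m % l = m`, and the extra term at `m = l - 1` involves a negative index.
So `λ_0, …, λ_{l-1}` obey the rescaled Chebyshev recurrence `λ_{m+2} = λ_{m+1} - γ λ_m`, whose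
solution for `γ = 1/(2 cos θ)²` is `λ_m = sin((m+1)θ) / (sin θ (2 cos θ)^m)`. With
`θ = π/(n+1)` the numerator is positive for `m < n` and vanishes at `m = n`.
-/

open Real

lemma sin_add_two_mul_eq (x θ : ℝ) :
    sin (x + 2 * θ) = 2 * cos θ * sin (x + θ) - sin x := by
  have hsub := sin_sub (x + θ) θ
  rw [add_sub_cancel_right] at hsub
  rw [show x + 2 * θ = (x + θ) + θ by ring, sin_add, hsub]
  ring

lemma eq_sin_div_of_chebyshev_rec {θ γ : ℝ} {N : ℕ} (u : ℕ → ℝ) (hsin : sin θ ≠ 0)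
    (hγ : γ * (2 * cos θ) ^ 2 = 1) (h0 : u 0 = 1) (h1 : u 1 = 1)
    (hrec : ∀ k, k + 2 ≤ N → u (k + 2) = u (k + 1) - γ * u k) :
    ∀ m ≤ N, u m = sin ((m + 1) * θ) / (sin θ * (2 * cos θ) ^ m) := by
  have hcos : cos θ ≠ 0 := by
    rintro hc
    simp [hc] at hγ
  intro m
  induction m using Nat.strong_induction_on with
  | _ m ih =>
    match m with
    | 0 => intro _; simp [h0, hsin]
    | 1 =>
      intro _
      rw [h1, Nat.cast_one, one_add_one_eq_two, sin_two_mul]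
      field_simp
    | k + 2 =>
      intro hk
      have hγ' : γ = 1 / (2 * cos θ) ^ 2 := by field_simp; linarith
      have hsin_rec := sin_add_two_mul_eq ((k + 1) * θ) θ
      rw [hrec k hk, ih (k + 1) (by omega) (by omega), ih k (by omega) (by omega), hγ']
      push_cast
      rw [show ((k : ℝ) + 2 + 1) * θ = (k + 1) * θ + 2 * θ by ring, hsin_rec,
        show ((k : ℝ) + 1 + 1) * θ = (k + 1) * θ + θ by ring]
      field_simp
      ring

lemma chebyshev_rec_of_add_two_le_sub_one {l : ℕ} {γ : ℝ} {lam : ℤ → ℝ}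
    (hlneg : ∀ m : ℤ, m < 0 → lam m = 0)
    (hrecl : ∀ m : ℕ, 2 ≤ m → m % l = l - 1 →
      lam (m : ℤ) = lam ((m : ℤ) - 1) - γ * lam ((m : ℤ) - 2) - γ ^ l * lam ((m : ℤ) - 2 * l))
    (hrece : ∀ m : ℕ, 2 ≤ m → m % l ≠ 0 → m % l ≠ 1 → m % l ≠ l - 1 →
      lam (m : ℤ) = lam ((m : ℤ) - 1) - γ * lam ((m : ℤ) - 2))
    (k : ℕ) (hk : k + 2 ≤ l - 1) :
    lam ((k + 2 : ℕ) : ℤ) = lam ((k + 1 : ℕ) : ℤ) - γ * lam (k : ℤ) := by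
  have hmod : (k + 2) % l = k + 2 := Nat.mod_eq_of_lt (by omega)
  have h₁ : ((k + 2 : ℕ) : ℤ) - 1 = ((k + 1 : ℕ) : ℤ) := by push_cast; ring
  have h₂ : ((k + 2 : ℕ) : ℤ) - 2 = (k : ℤ) := by push_cast; ring
  by_cases hlast : k + 2 = l - 1
  · have hneg : lam (((k + 2 : ℕ) : ℤ) - 2 * l) = 0 := hlneg _ (by omega)
    rw [hrecl (k + 2) (by omega) (by rw [hmod, hlast]), h₁, h₂, hneg, mul_zero, sub_zero]
  · rw [hrece (k + 2) (by omega) (by omega) (by omega) (by rw [hmod]; exact hlast), h₁, h₂]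

section Angle

variable {n : ℕ}

lemma cos_pi_div_succ_pos (hn : 2 ≤ n) : 0 < cos (π / (n + 1)) := by
  apply cos_pos_of_mem_Ioo ⟨by linarith [show 0 < π / (n + 1) by positivity, pi_pos], ?_⟩
  rw [div_lt_div_iff₀ (by positivity) two_pos]
  have : (2 : ℝ) ≤ n := by exact_mod_cast hn
  nlinarith [pi_pos]

lemma sin_succ_mul_pi_div_succ_pos {i : ℕ} (hi : i < n) : 0 < sin ((i + 1) * (π / (n + 1))) := by
  apply sin_pos_of_pos_of_lt_pi (by positivity)
  rw [mul_div_assoc', div_lt_iff₀ (by positivity)]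
  have : (i : ℝ) + 1 < n + 1 := by exact_mod_cast Nat.succ_lt_succ hi
  nlinarith [pi_pos]

lemma sin_succ_mul_pi_div_succ : sin ((n + 1) * (π / (n + 1))) = 0 := by
  rw [mul_div_cancel₀ _ (by positivity), sin_pi]

end Angle

theorem stmt_15_general (l n : ℕ) (hn1 : 2 ≤ n) (hn2 : n ≤ l - 1)
    (γ : ℝ) (hγ : γ = 1 / (4 * Real.cos (Real.pi / (n + 1)) ^ 2))
    (lam : ℤ → ℝ)
    (hlneg : ∀ m : ℤ, m < 0 → lam m = 0)
    (hl0 : lam 0 = 1) (hl1 : lam 1 = 1)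
    (hrecl : ∀ m : ℕ, 2 ≤ m → m % l = l - 1 →
      lam (m : ℤ) = lam ((m : ℤ) - 1) - γ * lam ((m : ℤ) - 2) - γ ^ l * lam ((m : ℤ) - 2 * l))
    (hrece : ∀ m : ℕ, 2 ≤ m → m % l ≠ 0 → m % l ≠ 1 → m % l ≠ l - 1 →
      lam (m : ℤ) = lam ((m : ℤ) - 1) - γ * lam ((m : ℤ) - 2)) :
    (∀ i : ℕ, i < n → 0 < lam (i : ℤ)) ∧ lam (n : ℤ) = 0 := by
  set θ := π / (n + 1)
  have hcos : 0 < cos θ := cos_pi_div_succ_pos hn1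
  have hsin : 0 < sin θ := by simpa using sin_succ_mul_pi_div_succ_pos (by omega : 0 < n)
  have hγθ : γ * (2 * cos θ) ^ 2 = 1 := by rw [hγ]; field_simp; ring
  have closed_form := eq_sin_div_of_chebyshev_rec (N := n) (fun m => lam m) hsin.ne' hγθ
    hl0 hl1 fun k hk => chebyshev_rec_of_add_two_le_sub_one hlneg hrecl hrece k (by omega)
  refine ⟨fun i hi => ?_, ?_⟩
  · rw [closed_form i hi.le]
    have := sin_succ_mul_pi_div_succ_pos hi
    positivity
  · rw [closed_form n le_rfl, sin_succ_mul_pi_div_succ, zero_div]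

/-- For `l ≥ 3`, `2 ≤ n ≤ l - 1` and `γ = 1/(4 cos²(π/(n+1)))`: `λ_i > 0` for
`0 ≤ i < n` and `λ_n = 0`. -/
theorem stmt_15 (l n : ℕ) (hl : 3 ≤ l) (hn1 : 2 ≤ n) (hn2 : n ≤ l - 1)
    (γ : ℝ) (hγ : γ = 1 / (4 * Real.cos (Real.pi / (n + 1)) ^ 2))
    (lam : ℤ → ℝ)
    (hlneg : ∀ m : ℤ, m < 0 → lam m = 0)
    (hl0 : lam 0 = 1) (hl1 : lam 1 = 1)
    (hrec0 : ∀ m : ℕ, 2 ≤ m → m % l = 0 → lam (m : ℤ) = lam ((m : ℤ) - 1))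
    (hrec1 : ∀ m : ℕ, 2 ≤ m → m % l = 1 →
      lam (m : ℤ) = lam ((m : ℤ) - 1) - 2 * γ * lam ((m : ℤ) - 2))
    (hrecl : ∀ m : ℕ, 2 ≤ m → m % l = l - 1 →
      lam (m : ℤ) = lam ((m : ℤ) - 1) - γ * lam ((m : ℤ) - 2) - γ ^ l * lam ((m : ℤ) - 2 * l))
    (hrece : ∀ m : ℕ, 2 ≤ m → m % l ≠ 0 → m % l ≠ 1 → m % l ≠ l - 1 →
      lam (m : ℤ) = lam ((m : ℤ) - 1) - γ * lam ((m : ℤ) - 2)) :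
    (∀ i : ℕ, i < n → 0 < lam (i : ℤ)) ∧ lam (n : ℤ) = 0 :=
  stmt_15_general l n hn1 hn2 γ hγ lam hlneg hl0 hl1 hrecl hrece
end
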